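/- arXiv:2511.03442 — 6 statements merged into one kernel-verified Lean document; each statement's English description precedes it below -/
import Mathlib

section
/- For β_x, β_y > 0, a point z is a saddle point of the convex-concave function (x,y) ↦ f(x) + ⟨Ax,y⟩ - g*(y) if and only if G_β(z) = 0. -/
/-!
Since `⟪-A†y, x'⟫ = -⟪Ax', y⟫`, the function under the supremum splits as `φ(x') + ψ(y')` with
`φ(x') = L(x) - L(x') - βx/2 ‖x - x'‖²` for the convex `L = f + ⟪A ·, y⟫`, and `ψ` the analogous
term for `g - ⟪Ax, ·⟫`; both vanish at `(x, y)`. So the supremum is zero exactly when `x` minimizes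
`L + βx/2 ‖x - ·‖²` (and likewise for `y`). For convex `L` this is the same as minimizing `L`:
comparing with `(1 - t) x + t x'` gives `t (L x - L x') ≤ c t² ‖x - x'‖²`, and we let `t → 0⁺`.
The two minimality conditions are the two saddle inequalities.
-/

open RealInnerProductSpace

/-- `ℝᵏ` with the Euclidean structure. -/
abbrev Eu (k : ℕ) := EuclideanSpace ℝ (Fin k)

open Set Filter Topology

lemma nonpos_of_forall_le_mul_of_mem_Ioc {D C : ℝ} (h : ∀ t ∈ Ioc (0 : ℝ) 1, D ≤ C * t) :
    D ≤ 0 := by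
  have hlim : Tendsto (fun t => C * t) (𝓝[>] 0) (𝓝 0) := by
    simpa using ((continuous_const_mul C).tendsto 0).mono_left nhdsWithin_le_nhds
  exact ge_of_tendsto hlim (eventually_of_mem (Ioc_mem_nhdsGT one_pos) h)

lemma ConvexOn.le_of_forall_le_add_mul_sq_norm {E : Type*} [NormedAddCommGroup E]
    [NormedSpace ℝ E] {s : Set E} {L : E → ℝ} (hL : ConvexOn ℝ s L) {x : E} (hx : x ∈ s)
    {c : ℝ} (h : ∀ z ∈ s, L x ≤ L z + c * ‖x - z‖ ^ 2) {z : E} (hz : z ∈ s) : L x ≤ L z := by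
  suffices L x - L z ≤ 0 by linarith
  refine nonpos_of_forall_le_mul_of_mem_Ioc (C := c * ‖x - z‖ ^ 2) fun t ⟨ht0, ht1⟩ => ?_
  have hseg : (1 - t) • x + t • z ∈ s := hL.1 hx hz (by linarith) ht0.le (by ring)
  have hconv : L ((1 - t) • x + t • z) ≤ (1 - t) * L x + t * L z :=
    hL.2 hx hz (by linarith) ht0.le (by ring)
  have hdist : ‖x - ((1 - t) • x + t • z)‖ = t * ‖x - z‖ := by
    rw [show x - ((1 - t) • x + t • z) = t • (x - z) by module, norm_smul,
      Real.norm_of_nonneg ht0.le]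
  have hprox := h _ hseg
  rw [hdist] at hprox
  have : t * (L x - L z) ≤ t * (c * ‖x - z‖ ^ 2 * t) := by nlinarith
  exact le_of_mul_le_mul_left this ht0

lemma ciSup_eq_iff_forall_le {ι : Type*} {S : ι → ℝ} (hS : BddAbove (range S)) {i₀ : ι}
    {a : ℝ} (hi₀ : S i₀ = a) : ⨆ i, S i = a ↔ ∀ i, S i ≤ a :=
  have : Nonempty ι := ⟨i₀⟩
  ⟨fun h i => h ▸ le_ciSup hS i, fun h => le_antisymm (ciSup_le h) (hi₀ ▸ le_ciSup hS i₀)⟩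

theorem saddle_iff_smoothed_gap_eq_zero_general {n m : ℕ}
    (f : Eu n → ℝ) (g : Eu m → ℝ)
    (hf : ConvexOn ℝ Set.univ f) (hg : ConvexOn ℝ Set.univ g)
    (A : Eu n →L[ℝ] Eu m)
    (βx βy : ℝ) (hβx : 0 < βx) (hβy : 0 < βy)
    (x : Eu n) (y : Eu m)
    (hbdd : BddAbove (Set.range (fun z' : Eu n × Eu m =>
      (f x + g y) - (f z'.1 + g z'.2)
        + (⟪-((ContinuousLinearMap.adjoint A) y), z'.1⟫ + ⟪A x, z'.2⟫)
        - βx / 2 * ‖x - z'.1‖ ^ 2 - βy / 2 * ‖y - z'.2‖ ^ 2))) :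
    (∀ (x' : Eu n) (y' : Eu m),
        f x + ⟪A x, y'⟫ - g y' ≤ f x + ⟪A x, y⟫ - g y ∧
        f x + ⟪A x, y⟫ - g y ≤ f x' + ⟪A x', y⟫ - g y) ↔
      (⨆ z' : Eu n × Eu m,
        ((f x + g y) - (f z'.1 + g z'.2)
          + (⟪-((ContinuousLinearMap.adjoint A) y), z'.1⟫ + ⟪A x, z'.2⟫)
          - βx / 2 * ‖x - z'.1‖ ^ 2 - βy / 2 * ‖y - z'.2‖ ^ 2)) = 0 := by
  have hLx : ConvexOn ℝ univ (fun u => f u + ⟪A u, y⟫) :=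
    hf.add (((innerₛₗ ℝ y).comp A.toLinearMap).convexOn convex_univ |>.congr
      fun u _ => real_inner_comm (A u) y)
  have hLy : ConvexOn ℝ univ (fun v => g v - ⟪A x, v⟫) :=
    hg.sub ((innerₛₗ ℝ (A x)).concaveOn convex_univ)
  rw [ciSup_eq_iff_forall_le hbdd (i₀ := (x, y))
    (by simp [ContinuousLinearMap.adjoint_inner_left, real_inner_comm])]
  simp only [Prod.forall, inner_neg_left, ContinuousLinearMap.adjoint_inner_left,
    real_inner_comm (y := y)]
  constructor
  · intro hsaddle x' y'
    obtain ⟨hy, hx⟩ := hsaddle x' y'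
    have : 0 ≤ βx / 2 * ‖x - x'‖ ^ 2 := by positivity
    have : 0 ≤ βy / 2 * ‖y - y'‖ ^ 2 := by positivity
    linarith
  · intro hgap x' y'
    have hx := hLx.le_of_forall_le_add_mul_sq_norm (mem_univ x) (c := βx / 2)
      (fun u _ => by linarith [hgap u y, show βy / 2 * ‖y - y‖ ^ 2 = 0 by simp]) (mem_univ x')
    have hy := hLy.le_of_forall_le_add_mul_sq_norm (mem_univ y) (c := βy / 2)
      (fun v _ => by linarith [hgap x v, show βx / 2 * ‖x - x‖ ^ 2 = 0 by simp]) (mem_univ y')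
    constructor <;> linarith

/-- For `β_x, β_y > 0`, a point `z = (x,y)` is a saddle point of
`(x,y) ↦ f(x) + ⟨Ax, y⟫ - g*(y)` if and only if the self-centered smoothed gap
`G_β(z) = sup_{z'} [F(z) - F(z') + ⟨Mz, z'⟩ - ½‖z - z'‖²_β]` vanishes. -/
theorem saddle_iff_smoothed_gap_eq_zero {n m : ℕ}
    (f : Eu n → ℝ) (g : Eu m → ℝ)
    (hf : ConvexOn ℝ Set.univ f) (hg : ConvexOn ℝ Set.univ g)
    (hflsc : LowerSemicontinuous f) (hglsc : LowerSemicontinuous g)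
    (A : Eu n →L[ℝ] Eu m)
    (βx βy : ℝ) (hβx : 0 < βx) (hβy : 0 < βy)
    (hsaddle : ∃ xs : Eu n, ∃ ys : Eu m, ∀ (x' : Eu n) (y' : Eu m),
      f xs + ⟪A xs, y'⟫ - g y' ≤ f xs + ⟪A xs, ys⟫ - g ys ∧
      f xs + ⟪A xs, ys⟫ - g ys ≤ f x' + ⟪A x', ys⟫ - g ys)
    (x : Eu n) (y : Eu m)
    (hbdd : BddAbove (Set.range (fun z' : Eu n × Eu m =>
      (f x + g y) - (f z'.1 + g z'.2)
        + (⟪-((ContinuousLinearMap.adjoint A) y), z'.1⟫ + ⟪A x, z'.2⟫)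
        - βx / 2 * ‖x - z'.1‖ ^ 2 - βy / 2 * ‖y - z'.2‖ ^ 2))) :
    (∀ (x' : Eu n) (y' : Eu m),
        f x + ⟪A x, y'⟫ - g y' ≤ f x + ⟪A x, y⟫ - g y ∧
        f x + ⟪A x, y⟫ - g y ≤ f x' + ⟪A x', y⟫ - g y) ↔
      (⨆ z' : Eu n × Eu m,
        ((f x + g y) - (f z'.1 + g z'.2)
          + (⟪-((ContinuousLinearMap.adjoint A) y), z'.1⟫ + ⟪A x, z'.2⟫)
          - βx / 2 * ‖x - z'.1‖ ^ 2 - βy / 2 * ‖y - z'.2‖ ^ 2)) = 0 :=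
  saddle_iff_smoothed_gap_eq_zero_general f g hf hg A βx βy hβx hβy x y hbdd
end

section
/- The gradient of F*_{β,M} is L-Lipschitz from the norm ‖·‖_{γ⁻¹} to the norm ‖·‖_γ, with L = max(β_xγ_x + (γ_x/β_y)‖A‖², β_yγ_y + (γ_y/β_x)‖A‖²) + max(β_xγ_x, β_yγ_y). -/
open RealInnerProductSpace

section aux
variable {E : Type*} [NormedAddCommGroup E] [InnerProductSpace ℝ E]

lemma norm_combo_aux (x y : E) (t : ℝ) :
    ‖(1-t)•x + t•y‖^2 = (1-t)*‖x‖^2 + t*‖y‖^2 - t*(1-t)*‖y-x‖^2 := by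
  have h : ∀ v : E, ‖v‖^2 = ⟪v,v⟫ := fun v => (real_inner_self_eq_norm_sq v).symm
  rw [h, h, h, h]
  simp only [inner_add_left, inner_add_right, inner_sub_left, inner_sub_right,
    real_inner_smul_left, real_inner_smul_right, real_inner_comm x y]
  ring

lemma four_norm_aux (a b c d : E) :
    ‖a-c‖^2 - ‖a-d‖^2 - ‖b-c‖^2 + ‖b-d‖^2 = -(2*⟪a-b, c-d⟫) := by
  have h : ∀ v : E, ‖v‖^2 = ⟪v,v⟫ := fun v => (real_inner_self_eq_norm_sq v).symm
  rw [h, h, h, h]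
  simp only [inner_sub_left, inner_sub_right, real_inner_comm a c, real_inner_comm a d,
    real_inner_comm b c, real_inner_comm b d]
  ring

end aux

lemma cauchy2_aux (c1 c2 a1 a2 b1 b2 : ℝ) (hc1 : 0 < c1) (hc2 : 0 < c2) :
    a1*b1 + a2*b2 ≤ Real.sqrt (c1*a1^2 + c2*a2^2) * Real.sqrt (c1⁻¹*b1^2 + c2⁻¹*b2^2) := by
  rw [← Real.sqrt_mul (by positivity)]
  rcases le_or_gt (a1*b1 + a2*b2) 0 with h | h
  · exact h.trans (Real.sqrt_nonneg _)
  · rw [Real.le_sqrt' h]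
    have key : c1*c2*((a1*b1+a2*b2)^2) ≤ c1*c2*((c1*a1^2+c2*a2^2)*(c1⁻¹*b1^2+c2⁻¹*b2^2)) := by
      have hrw : c1*c2*((c1*a1^2+c2*a2^2)*(c1⁻¹*b1^2+c2⁻¹*b2^2))
          = (c1*a1^2+c2*a2^2)*(c2*b1^2+c1*b2^2) := by
        have e1 : c1 * c1⁻¹ = 1 := mul_inv_cancel₀ hc1.ne'
        have e2 : c2 * c2⁻¹ = 1 := mul_inv_cancel₀ hc2.ne'
        linear_combination (c2*b1^2*(c1*a1^2+c2*a2^2))*e1 + (c1*b2^2*(c1*a1^2+c2*a2^2))*e2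
      rw [hrw]
      nlinarith [sq_nonneg (c1*a1*b2 - c2*a2*b1), mul_pos hc1 hc2]
    have := le_of_mul_le_mul_left key (mul_pos hc1 hc2)
    linarith

lemma wtri_aux (c1 c2 a1 a2 b1 b2 : ℝ) (hc1 : 0 < c1) (hc2 : 0 < c2)
    (ha1 : 0 ≤ a1) (ha2 : 0 ≤ a2) (hb1 : 0 ≤ b1) (hb2 : 0 ≤ b2) :
    Real.sqrt (c1*(a1+a2)^2 + c2*(b1+b2)^2)
      ≤ Real.sqrt (c1*a1^2 + c2*b1^2) + Real.sqrt (c1*a2^2 + c2*b2^2) := by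
  set X := c1*a1^2 + c2*b1^2 with hX
  set Y := c1*a2^2 + c2*b2^2 with hY
  have hX0 : 0 ≤ X := by positivity
  have hY0 : 0 ≤ Y := by positivity
  have hcross : c1*a1*a2 + c2*b1*b2 ≤ Real.sqrt (X*Y) := by
    rcases le_or_gt (c1*a1*a2 + c2*b1*b2) 0 with h | h
    · exact h.trans (Real.sqrt_nonneg _)
    · rw [Real.le_sqrt' h]
      nlinarith [sq_nonneg (a1*b2 - a2*b1), mul_pos hc1 hc2]
  have harg : c1*(a1+a2)^2 + c2*(b1+b2)^2 ≤ (Real.sqrt X + Real.sqrt Y)^2 := by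
    have h1 : (Real.sqrt X + Real.sqrt Y)^2 = X + Y + 2*Real.sqrt (X*Y) := by
      rw [add_sq, Real.sq_sqrt hX0, Real.sq_sqrt hY0, Real.sqrt_mul hX0]
      ring
    rw [h1]; nlinarith
  calc Real.sqrt (c1*(a1+a2)^2 + c2*(b1+b2)^2) ≤ Real.sqrt ((Real.sqrt X + Real.sqrt Y)^2) :=
        Real.sqrt_le_sqrt harg
    _ = Real.sqrt X + Real.sqrt Y := Real.sqrt_sq (by positivity)

lemma poly1_aux (bx by' gx gy a p q r s t : ℝ) (hbx : 0 < bx) (hby : 0 < by')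
    (hgx : 0 < gx) (hgy : 0 < gy) (hc : by'*gy ≤ bx*gx)
    (hs : s ≤ a*q) (ht : t ≤ a*p) (hs0 : 0 ≤ s) (ht0 : 0 ≤ t)
    (hr : r ≤ a*p*q) :
    by' * (gx*(bx^2*p^2 + 2*bx*r + s^2) + gy*(by'^2*q^2 - 2*by'*r + t^2))
      ≤ (bx*gx*by' + gx*a^2) * (bx*p^2 + by'*q^2) := by
  have h1 : by'*gx*s^2 ≤ by'*gx*(a*q)^2 :=
    mul_le_mul_of_nonneg_left (pow_le_pow_left₀ hs0 hs 2) (by positivity)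
  have h2 : by'*gy*t^2 ≤ by'*gy*(a*p)^2 :=
    mul_le_mul_of_nonneg_left (pow_le_pow_left₀ ht0 ht 2) (by positivity)
  have hcc : 0 ≤ gx*bx - gy*by' := by nlinarith
  have h3 : 2*by'*(gx*bx - gy*by')*r ≤ 2*by'*(gx*bx - gy*by')*(a*p*q) := by
    apply mul_le_mul_of_nonneg_left hr; positivity
  have h4 : 0 ≤ (gx*bx - gy*by')*(a*p - by'*q)^2 := by positivity
  nlinarith [h1, h2, h3, h4]

lemma limit_aux (c S : ℝ) (hc : 0 ≤ c) (hS : 0 ≤ S)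
    (h : ∀ t : ℝ, 0 < t → t < 1 → (1-t)/2*S ≤ c) : S/2 ≤ c := by
  by_contra h1
  push_neg at h1
  have hSpos : 0 < S := by linarith
  have ht0 : 0 < (S - 2*c)/(2*S) := div_pos (by linarith) (by linarith)
  have ht1 : (S - 2*c)/(2*S) < 1 := by
    rw [div_lt_one (by linarith)]; linarith
  have hp := h ((S - 2*c)/(2*S)) ht0 ht1
  have heq : (1 - (S - 2*c)/(2*S))/2 * S = (S + 2*c)/4 := by
    field_simp
    ring
  linarith

set_option maxHeartbeats 4000000 in
/-- The gradient `∇F*_{β,M}(z) = -M z̄_β(z) + β.(z̄_β(z) - z)` is Lipschitz from the norm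
`‖·‖_{γ⁻¹}` to the norm `‖·‖_γ` with constant
`L = max(β_xγ_x + (γ_x/β_y)‖A‖², β_yγ_y + (γ_y/β_x)‖A‖²) + max(β_xγ_x, β_yγ_y)`. -/
theorem gradient_lipschitz {n m : ℕ}
    (F : Eu n × Eu m → ℝ)
    (hF : ConvexOn ℝ Set.univ F) (hFlsc : LowerSemicontinuous F)
    (A : Eu n →L[ℝ] Eu m)
    (βx βy γx γy : ℝ) (hβx : 0 < βx) (hβy : 0 < βy) (hγx : 0 < γx) (hγy : 0 < γy)
    (zbar : Eu n × Eu m → Eu n × Eu m)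
    (hzbar : ∀ z z' : Eu n × Eu m,
      F (zbar z) - (⟪-((ContinuousLinearMap.adjoint A) z.2), (zbar z).1⟫ + ⟪A z.1, (zbar z).2⟫)
          + βx / 2 * ‖(zbar z).1 - z.1‖ ^ 2 + βy / 2 * ‖(zbar z).2 - z.2‖ ^ 2
        ≤ F z' - (⟪-((ContinuousLinearMap.adjoint A) z.2), z'.1⟫ + ⟪A z.1, z'.2⟫)
          + βx / 2 * ‖z'.1 - z.1‖ ^ 2 + βy / 2 * ‖z'.2 - z.2‖ ^ 2)
    (grad : Eu n × Eu m → Eu n × Eu m)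
    (hgrad : ∀ z : Eu n × Eu m,
      grad z = ((ContinuousLinearMap.adjoint A) (zbar z).2 + βx • ((zbar z).1 - z.1),
                -(A (zbar z).1) + βy • ((zbar z).2 - z.2))) :
    ∀ z₁ z₂ : Eu n × Eu m,
      Real.sqrt (γx * ‖(grad z₁).1 - (grad z₂).1‖ ^ 2 + γy * ‖(grad z₁).2 - (grad z₂).2‖ ^ 2) ≤
        (max (βx * γx + γx / βy * ‖A‖ ^ 2) (βy * γy + γy / βx * ‖A‖ ^ 2)
            + max (βx * γx) (βy * γy)) *
          Real.sqrt (γx⁻¹ * ‖z₁.1 - z₂.1‖ ^ 2 + γy⁻¹ * ‖z₁.2 - z₂.2‖ ^ 2) := by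
  -- strong minimality
  have strong : ∀ z z' : Eu n × Eu m,
      F (zbar z) - (⟪-((ContinuousLinearMap.adjoint A) z.2), (zbar z).1⟫ + ⟪A z.1, (zbar z).2⟫)
          + βx / 2 * ‖(zbar z).1 - z.1‖ ^ 2 + βy / 2 * ‖(zbar z).2 - z.2‖ ^ 2
          + (βx / 2 * ‖z'.1 - (zbar z).1‖ ^ 2 + βy / 2 * ‖z'.2 - (zbar z).2‖ ^ 2)
        ≤ F z' - (⟪-((ContinuousLinearMap.adjoint A) z.2), z'.1⟫ + ⟪A z.1, z'.2⟫)
          + βx / 2 * ‖z'.1 - z.1‖ ^ 2 + βy / 2 * ‖z'.2 - z.2‖ ^ 2 := by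
    intro z z'
    set w := zbar z with hw
    have hpar : ∀ t : ℝ, 0 < t → t < 1 →
        F w - (⟪-((ContinuousLinearMap.adjoint A) z.2), w.1⟫ + ⟪A z.1, w.2⟫)
            + βx / 2 * ‖w.1 - z.1‖ ^ 2 + βy / 2 * ‖w.2 - z.2‖ ^ 2
            + (1-t)/2 * (βx * ‖z'.1 - w.1‖ ^ 2 + βy * ‖z'.2 - w.2‖ ^ 2)
          ≤ F z' - (⟪-((ContinuousLinearMap.adjoint A) z.2), z'.1⟫ + ⟪A z.1, z'.2⟫)
            + βx / 2 * ‖z'.1 - z.1‖ ^ 2 + βy / 2 * ‖z'.2 - z.2‖ ^ 2 := by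
      intro t ht0 ht1
      have ht1' : (0:ℝ) ≤ 1 - t := by linarith
      have hpt := hzbar z ((1-t)•w + t•z')
      rw [← hw] at hpt
      have hconv := hF.2 (Set.mem_univ w) (Set.mem_univ z') ht1' ht0.le (by ring)
      rw [smul_eq_mul, smul_eq_mul] at hconv
      have hc1 : ((1-t)•w + t•z').1 = (1-t)•w.1 + t•z'.1 := rfl
      have hc2 : ((1-t)•w + t•z').2 = (1-t)•w.2 + t•z'.2 := rfl
      have hq1 : ‖((1-t)•w + t•z').1 - z.1‖^2
          = (1-t)*‖w.1-z.1‖^2 + t*‖z'.1-z.1‖^2 - t*(1-t)*‖z'.1-w.1‖^2 := by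
        have e : ((1-t)•w + t•z').1 - z.1 = (1-t)•(w.1-z.1) + t•(z'.1-z.1) := by
          rw [hc1]; module
        rw [e, norm_combo_aux, sub_sub_sub_cancel_right]
      have hq2 : ‖((1-t)•w + t•z').2 - z.2‖^2
          = (1-t)*‖w.2-z.2‖^2 + t*‖z'.2-z.2‖^2 - t*(1-t)*‖z'.2-w.2‖^2 := by
        have e : ((1-t)•w + t•z').2 - z.2 = (1-t)•(w.2-z.2) + t•(z'.2-z.2) := by
          rw [hc2]; module
        rw [e, norm_combo_aux, sub_sub_sub_cancel_right]
      have hi1 : ⟪-((ContinuousLinearMap.adjoint A) z.2), ((1-t)•w + t•z').1⟫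
          = (1-t)*⟪-((ContinuousLinearMap.adjoint A) z.2), w.1⟫
            + t*⟪-((ContinuousLinearMap.adjoint A) z.2), z'.1⟫ := by
        rw [hc1]; simp only [inner_add_right, real_inner_smul_right]
      have hi2 : ⟪A z.1, ((1-t)•w + t•z').2⟫
          = (1-t)*⟪A z.1, w.2⟫ + t*⟪A z.1, z'.2⟫ := by
        rw [hc2]; simp only [inner_add_right, real_inner_smul_right]
      rw [hq1, hq2, hi1, hi2] at hpt
      have hmul : t * (F w - (⟪-((ContinuousLinearMap.adjoint A) z.2), w.1⟫ + ⟪A z.1, w.2⟫)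
            + βx / 2 * ‖w.1 - z.1‖ ^ 2 + βy / 2 * ‖w.2 - z.2‖ ^ 2
            + (1-t)/2 * (βx * ‖z'.1 - w.1‖ ^ 2 + βy * ‖z'.2 - w.2‖ ^ 2))
          ≤ t * (F z' - (⟪-((ContinuousLinearMap.adjoint A) z.2), z'.1⟫ + ⟪A z.1, z'.2⟫)
            + βx / 2 * ‖z'.1 - z.1‖ ^ 2 + βy / 2 * ‖z'.2 - z.2‖ ^ 2) := by
        linarith [hpt, hconv]
      exact le_of_mul_le_mul_left hmul ht0
    -- limit t → 0
    have hS0 : 0 ≤ βx * ‖z'.1 - w.1‖ ^ 2 + βy * ‖z'.2 - w.2‖ ^ 2 := by positivity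
    have hc0 := hzbar z z'
    rw [← hw] at hc0
    have hlim := limit_aux
      ((F z' - (⟪-((ContinuousLinearMap.adjoint A) z.2), z'.1⟫ + ⟪A z.1, z'.2⟫)
          + βx / 2 * ‖z'.1 - z.1‖ ^ 2 + βy / 2 * ‖z'.2 - z.2‖ ^ 2)
        - (F w - (⟪-((ContinuousLinearMap.adjoint A) z.2), w.1⟫ + ⟪A z.1, w.2⟫)
          + βx / 2 * ‖w.1 - z.1‖ ^ 2 + βy / 2 * ‖w.2 - z.2‖ ^ 2))
      (βx * ‖z'.1 - w.1‖ ^ 2 + βy * ‖z'.2 - w.2‖ ^ 2)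
      (by linarith [hc0]) hS0
      (fun t ht0 ht1 => by linarith [hpar t ht0 ht1])
    linarith [hlim]
  intro z₁ z₂
  have S1 := strong z₁ (zbar z₂)
  have S2 := strong z₂ (zbar z₁)
  have hG1 := hgrad z₁
  have hG2 := hgrad z₂
  set u := zbar z₁ with hu
  set v := zbar z₂ with hv
  -- gradient difference identities
  have hg1 : (grad z₁).1 - (grad z₂).1
      = (βx • (u.1 - v.1) + (ContinuousLinearMap.adjoint A) (u.2 - v.2)) - βx • (z₁.1 - z₂.1) := by
    rw [hG1, hG2]
    show ((ContinuousLinearMap.adjoint A) u.2 + βx • (u.1 - z₁.1))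
        - ((ContinuousLinearMap.adjoint A) v.2 + βx • (v.1 - z₂.1)) = _
    rw [map_sub]; module
  have hg2 : (grad z₁).2 - (grad z₂).2
      = (βy • (u.2 - v.2) - A (u.1 - v.1)) - βy • (z₁.2 - z₂.2) := by
    rw [hG1, hG2]
    show (-(A u.1) + βy • (u.2 - z₁.2)) - (-(A v.1) + βy • (v.2 - z₂.2)) = _
    rw [map_sub]; module
  -- the key monotonicity inequality
  have hq1 := four_norm_aux u.1 v.1 z₁.1 z₂.1
  have hq2 := four_norm_aux u.2 v.2 z₁.2 z₂.2
  have hDx : ⟪βx • (u.1 - v.1) + (ContinuousLinearMap.adjoint A) (u.2 - v.2), z₁.1 - z₂.1⟫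
      = βx * ⟪u.1 - v.1, z₁.1 - z₂.1⟫
        + (⟪A z₁.1, u.2⟫ - ⟪A z₁.1, v.2⟫ - ⟪A z₂.1, u.2⟫ + ⟪A z₂.1, v.2⟫) := by
    have c1 : ⟪u.2, A z₁.1⟫ = ⟪A z₁.1, u.2⟫ := real_inner_comm _ _
    have c2 : ⟪u.2, A z₂.1⟫ = ⟪A z₂.1, u.2⟫ := real_inner_comm _ _
    have c3 : ⟪v.2, A z₁.1⟫ = ⟪A z₁.1, v.2⟫ := real_inner_comm _ _
    have c4 : ⟪v.2, A z₂.1⟫ = ⟪A z₂.1, v.2⟫ := real_inner_comm _ _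
    simp only [inner_add_left, real_inner_smul_left, ContinuousLinearMap.adjoint_inner_left,
      map_sub, inner_sub_left, inner_sub_right]
    linarith [c1, c2, c3, c4]
  have hDy : ⟪βy • (u.2 - v.2) - A (u.1 - v.1), z₁.2 - z₂.2⟫
      = βy * ⟪u.2 - v.2, z₁.2 - z₂.2⟫
        + (⟪-((ContinuousLinearMap.adjoint A) z₁.2), u.1⟫
           - ⟪-((ContinuousLinearMap.adjoint A) z₁.2), v.1⟫
           - ⟪-((ContinuousLinearMap.adjoint A) z₂.2), u.1⟫
           + ⟪-((ContinuousLinearMap.adjoint A) z₂.2), v.1⟫) := by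
    have c1 : ⟪A u.1, z₁.2⟫ = ⟪z₁.2, A u.1⟫ := real_inner_comm _ _
    have c2 : ⟪A u.1, z₂.2⟫ = ⟪z₂.2, A u.1⟫ := real_inner_comm _ _
    have c3 : ⟪A v.1, z₁.2⟫ = ⟪z₁.2, A v.1⟫ := real_inner_comm _ _
    have c4 : ⟪A v.1, z₂.2⟫ = ⟪z₂.2, A v.1⟫ := real_inner_comm _ _
    simp only [inner_sub_left, inner_sub_right, inner_neg_left, real_inner_smul_left,
      ContinuousLinearMap.adjoint_inner_left, map_sub]
    linarith [c1, c2, c3, c4]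
  have key : βx * ‖u.1 - v.1‖ ^ 2 + βy * ‖u.2 - v.2‖ ^ 2
      ≤ ⟪βx • (u.1 - v.1) + (ContinuousLinearMap.adjoint A) (u.2 - v.2), z₁.1 - z₂.1⟫
        + ⟪βy • (u.2 - v.2) - A (u.1 - v.1), z₁.2 - z₂.2⟫ := by
    have hn1 : ‖v.1 - u.1‖ ^ 2 = ‖u.1 - v.1‖ ^ 2 := by rw [norm_sub_rev]
    have hn2 : ‖v.2 - u.2‖ ^ 2 = ‖u.2 - v.2‖ ^ 2 := by rw [norm_sub_rev]
    have hq1b : βx/2 * ‖u.1 - z₁.1‖ ^ 2 - βx/2 * ‖u.1 - z₂.1‖ ^ 2 - βx/2 * ‖v.1 - z₁.1‖ ^ 2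
        + βx/2 * ‖v.1 - z₂.1‖ ^ 2 = -(βx * ⟪u.1 - v.1, z₁.1 - z₂.1⟫) := by
      linear_combination (βx/2) * hq1
    have hq2b : βy/2 * ‖u.2 - z₁.2‖ ^ 2 - βy/2 * ‖u.2 - z₂.2‖ ^ 2 - βy/2 * ‖v.2 - z₁.2‖ ^ 2
        + βy/2 * ‖v.2 - z₂.2‖ ^ 2 = -(βy * ⟪u.2 - v.2, z₁.2 - z₂.2⟫) := by
      linear_combination (βy/2) * hq2
    have hn1b : βx/2 * ‖v.1 - u.1‖ ^ 2 = βx/2 * ‖u.1 - v.1‖ ^ 2 := by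
      linear_combination (βx/2) * hn1
    have hn2b : βy/2 * ‖v.2 - u.2‖ ^ 2 = βy/2 * ‖u.2 - v.2‖ ^ 2 := by
      linear_combination (βy/2) * hn2
    linarith only [S1, S2, hq1b, hq2b, hDx, hDy, hn1b, hn2b]
  -- norm expansions
  have hDxn : ‖βx • (u.1 - v.1) + (ContinuousLinearMap.adjoint A) (u.2 - v.2)‖ ^ 2
      = βx ^ 2 * ‖u.1 - v.1‖ ^ 2 + 2 * βx * ⟪A (u.1 - v.1), u.2 - v.2⟫
        + ‖(ContinuousLinearMap.adjoint A) (u.2 - v.2)‖ ^ 2 := by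
    rw [norm_add_sq_real, real_inner_smul_left, ContinuousLinearMap.adjoint_inner_right,
      norm_smul, Real.norm_eq_abs, abs_of_pos hβx, mul_pow]
    ring
  have hDyn : ‖βy • (u.2 - v.2) - A (u.1 - v.1)‖ ^ 2
      = βy ^ 2 * ‖u.2 - v.2‖ ^ 2 - 2 * βy * ⟪A (u.1 - v.1), u.2 - v.2⟫
        + ‖A (u.1 - v.1)‖ ^ 2 := by
    rw [norm_sub_sq_real, real_inner_smul_left, real_inner_comm (u.2 - v.2) (A (u.1 - v.1)),
      norm_smul, Real.norm_eq_abs, abs_of_pos hβy, mul_pow]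
    ring
  -- operator bounds
  have hAx : ‖A (u.1 - v.1)‖ ≤ ‖A‖ * ‖u.1 - v.1‖ := A.le_opNorm _
  have hAy : ‖(ContinuousLinearMap.adjoint A) (u.2 - v.2)‖ ≤ ‖A‖ * ‖u.2 - v.2‖ := by
    have h := (ContinuousLinearMap.adjoint A).le_opNorm (u.2 - v.2)
    rwa [ContinuousLinearMap.adjoint.norm_map A] at h
  have hr1 : ⟪A (u.1 - v.1), u.2 - v.2⟫ ≤ ‖A‖ * ‖u.1 - v.1‖ * ‖u.2 - v.2‖ := by
    have h1 : ⟪A (u.1 - v.1), u.2 - v.2⟫ ≤ ‖A (u.1 - v.1)‖ * ‖u.2 - v.2‖ :=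
      real_inner_le_norm _ _
    exact h1.trans (mul_le_mul_of_nonneg_right hAx (norm_nonneg _))
  have hr2 : -⟪A (u.1 - v.1), u.2 - v.2⟫ ≤ ‖A‖ * ‖u.2 - v.2‖ * ‖u.1 - v.1‖ := by
    have h0 := abs_real_inner_le_norm (A (u.1 - v.1)) (u.2 - v.2)
    have h1 : -⟪A (u.1 - v.1), u.2 - v.2⟫ ≤ ‖A (u.1 - v.1)‖ * ‖u.2 - v.2‖ := by
      have := neg_abs_le (⟪A (u.1 - v.1), u.2 - v.2⟫ : ℝ)
      linarith
    calc -⟪A (u.1 - v.1), u.2 - v.2⟫ ≤ ‖A (u.1 - v.1)‖ * ‖u.2 - v.2‖ := h1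
      _ ≤ (‖A‖ * ‖u.1 - v.1‖) * ‖u.2 - v.2‖ :=
          mul_le_mul_of_nonneg_right hAx (norm_nonneg _)
      _ = ‖A‖ * ‖u.2 - v.2‖ * ‖u.1 - v.1‖ := by ring
  -- N² ≤ K·Sβ
  have hcase : γx * ‖βx • (u.1 - v.1) + (ContinuousLinearMap.adjoint A) (u.2 - v.2)‖ ^ 2
        + γy * ‖βy • (u.2 - v.2) - A (u.1 - v.1)‖ ^ 2
      ≤ max (βx * γx + γx / βy * ‖A‖ ^ 2) (βy * γy + γy / βx * ‖A‖ ^ 2)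
        * (βx * ‖u.1 - v.1‖ ^ 2 + βy * ‖u.2 - v.2‖ ^ 2) := by
    rw [hDxn, hDyn]
    rcases le_total (βy * γy) (βx * γx) with hc | hc
    · have hp1 := poly1_aux βx βy γx γy ‖A‖ ‖u.1 - v.1‖ ‖u.2 - v.2‖
        (⟪A (u.1 - v.1), u.2 - v.2⟫) ‖(ContinuousLinearMap.adjoint A) (u.2 - v.2)‖
        ‖A (u.1 - v.1)‖ hβx hβy hγx hγy hc hAy hAx (norm_nonneg _) (norm_nonneg _) hr1
      have heq2 : βy * ((βx * γx + γx / βy * ‖A‖ ^ 2)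
            * (βx * ‖u.1 - v.1‖ ^ 2 + βy * ‖u.2 - v.2‖ ^ 2))
          = (βx * γx * βy + γx * ‖A‖ ^ 2) * (βx * ‖u.1 - v.1‖ ^ 2 + βy * ‖u.2 - v.2‖ ^ 2) := by
        have e : βy * βy⁻¹ = 1 := mul_inv_cancel₀ hβy.ne'
        linear_combination (γx * ‖A‖ ^ 2 * (βx * ‖u.1 - v.1‖ ^ 2 + βy * ‖u.2 - v.2‖ ^ 2)) * e
      have h2 : γx * (βx ^ 2 * ‖u.1 - v.1‖ ^ 2 + 2 * βx * ⟪A (u.1 - v.1), u.2 - v.2⟫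
            + ‖(ContinuousLinearMap.adjoint A) (u.2 - v.2)‖ ^ 2)
          + γy * (βy ^ 2 * ‖u.2 - v.2‖ ^ 2 - 2 * βy * ⟪A (u.1 - v.1), u.2 - v.2⟫
            + ‖A (u.1 - v.1)‖ ^ 2)
          ≤ (βx * γx + γx / βy * ‖A‖ ^ 2)
            * (βx * ‖u.1 - v.1‖ ^ 2 + βy * ‖u.2 - v.2‖ ^ 2) := by
        apply le_of_mul_le_mul_left _ hβy
        rw [heq2]
        linarith only [hp1]
      refine h2.trans (mul_le_mul_of_nonneg_right (le_max_left _ _) (by positivity))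
    · have hp1 := poly1_aux βy βx γy γx ‖A‖ ‖u.2 - v.2‖ ‖u.1 - v.1‖
        (-⟪A (u.1 - v.1), u.2 - v.2⟫) ‖A (u.1 - v.1)‖
        ‖(ContinuousLinearMap.adjoint A) (u.2 - v.2)‖
        hβy hβx hγy hγx hc hAx hAy (norm_nonneg _) (norm_nonneg _) hr2
      have heq2 : βx * ((βy * γy + γy / βx * ‖A‖ ^ 2)
            * (βx * ‖u.1 - v.1‖ ^ 2 + βy * ‖u.2 - v.2‖ ^ 2))
          = (βy * γy * βx + γy * ‖A‖ ^ 2) * (βy * ‖u.2 - v.2‖ ^ 2 + βx * ‖u.1 - v.1‖ ^ 2) := by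
        have e : βx * βx⁻¹ = 1 := mul_inv_cancel₀ hβx.ne'
        linear_combination (γy * ‖A‖ ^ 2 * (βy * ‖u.2 - v.2‖ ^ 2 + βx * ‖u.1 - v.1‖ ^ 2)) * e
      have h2 : γx * (βx ^ 2 * ‖u.1 - v.1‖ ^ 2 + 2 * βx * ⟪A (u.1 - v.1), u.2 - v.2⟫
            + ‖(ContinuousLinearMap.adjoint A) (u.2 - v.2)‖ ^ 2)
          + γy * (βy ^ 2 * ‖u.2 - v.2‖ ^ 2 - 2 * βy * ⟪A (u.1 - v.1), u.2 - v.2⟫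
            + ‖A (u.1 - v.1)‖ ^ 2)
          ≤ (βy * γy + γy / βx * ‖A‖ ^ 2)
            * (βx * ‖u.1 - v.1‖ ^ 2 + βy * ‖u.2 - v.2‖ ^ 2) := by
        apply le_of_mul_le_mul_left _ hβx
        rw [heq2]
        linarith only [hp1]
      refine h2.trans (mul_le_mul_of_nonneg_right (le_max_right _ _) (by positivity))
  -- Cauchy–Schwarz step
  have hCS : ⟪βx • (u.1 - v.1) + (ContinuousLinearMap.adjoint A) (u.2 - v.2), z₁.1 - z₂.1⟫
        + ⟪βy • (u.2 - v.2) - A (u.1 - v.1), z₁.2 - z₂.2⟫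
      ≤ Real.sqrt (γx * ‖βx • (u.1 - v.1) + (ContinuousLinearMap.adjoint A) (u.2 - v.2)‖ ^ 2
          + γy * ‖βy • (u.2 - v.2) - A (u.1 - v.1)‖ ^ 2)
        * Real.sqrt (γx⁻¹ * ‖z₁.1 - z₂.1‖ ^ 2 + γy⁻¹ * ‖z₁.2 - z₂.2‖ ^ 2) := by
    have h1 := real_inner_le_norm (βx • (u.1 - v.1)
      + (ContinuousLinearMap.adjoint A) (u.2 - v.2)) (z₁.1 - z₂.1)
    have h2 := real_inner_le_norm (βy • (u.2 - v.2) - A (u.1 - v.1)) (z₁.2 - z₂.2)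
    have h3 := cauchy2_aux γx γy
      ‖βx • (u.1 - v.1) + (ContinuousLinearMap.adjoint A) (u.2 - v.2)‖
      ‖βy • (u.2 - v.2) - A (u.1 - v.1)‖ ‖z₁.1 - z₂.1‖ ‖z₁.2 - z₂.2‖ hγx hγy
    linarith only [h1, h2, h3]
  have hK0 : 0 ≤ max (βx * γx + γx / βy * ‖A‖ ^ 2) (βy * γy + γy / βx * ‖A‖ ^ 2) :=
    le_trans (by positivity) (le_max_left _ _)
  have hN : Real.sqrt (γx * ‖βx • (u.1 - v.1) + (ContinuousLinearMap.adjoint A) (u.2 - v.2)‖ ^ 2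
        + γy * ‖βy • (u.2 - v.2) - A (u.1 - v.1)‖ ^ 2)
      ≤ max (βx * γx + γx / βy * ‖A‖ ^ 2) (βy * γy + γy / βx * ‖A‖ ^ 2)
        * Real.sqrt (γx⁻¹ * ‖z₁.1 - z₂.1‖ ^ 2 + γy⁻¹ * ‖z₁.2 - z₂.2‖ ^ 2) := by
    set N := Real.sqrt (γx * ‖βx • (u.1 - v.1)
      + (ContinuousLinearMap.adjoint A) (u.2 - v.2)‖ ^ 2
      + γy * ‖βy • (u.2 - v.2) - A (u.1 - v.1)‖ ^ 2) with hNdef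
    have hNsq : N ^ 2 = γx * ‖βx • (u.1 - v.1) + (ContinuousLinearMap.adjoint A) (u.2 - v.2)‖ ^ 2
        + γy * ‖βy • (u.2 - v.2) - A (u.1 - v.1)‖ ^ 2 := Real.sq_sqrt (by positivity)
    have hN0 : 0 ≤ N := Real.sqrt_nonneg _
    rcases hN0.eq_or_lt with h | h
    · rw [← h]
      exact mul_nonneg hK0 (Real.sqrt_nonneg _)
    · have hchain : N ^ 2 ≤ max (βx * γx + γx / βy * ‖A‖ ^ 2) (βy * γy + γy / βx * ‖A‖ ^ 2)
          * (N * Real.sqrt (γx⁻¹ * ‖z₁.1 - z₂.1‖ ^ 2 + γy⁻¹ * ‖z₁.2 - z₂.2‖ ^ 2)) := by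
        nlinarith only [hcase, key, hCS, hNsq, hK0, Real.sqrt_nonneg (γx⁻¹ * ‖z₁.1 - z₂.1‖ ^ 2 + γy⁻¹ * ‖z₁.2 - z₂.2‖ ^ 2)]
      nlinarith only [hchain, h]
  -- weighted norm triangle estimates
  have hgb1 : ‖(grad z₁).1 - (grad z₂).1‖
      ≤ ‖βx • (u.1 - v.1) + (ContinuousLinearMap.adjoint A) (u.2 - v.2)‖ + βx * ‖z₁.1 - z₂.1‖ := by
    rw [hg1]
    refine (norm_sub_le _ _).trans ?_
    rw [norm_smul, Real.norm_eq_abs, abs_of_pos hβx]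
  have hgb2 : ‖(grad z₁).2 - (grad z₂).2‖
      ≤ ‖βy • (u.2 - v.2) - A (u.1 - v.1)‖ + βy * ‖z₁.2 - z₂.2‖ := by
    rw [hg2]
    refine (norm_sub_le _ _).trans ?_
    rw [norm_smul, Real.norm_eq_abs, abs_of_pos hβy]
  have step1 : Real.sqrt (γx * ‖(grad z₁).1 - (grad z₂).1‖ ^ 2
        + γy * ‖(grad z₁).2 - (grad z₂).2‖ ^ 2)
      ≤ Real.sqrt (γx * (‖βx • (u.1 - v.1) + (ContinuousLinearMap.adjoint A) (u.2 - v.2)‖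
            + βx * ‖z₁.1 - z₂.1‖) ^ 2
          + γy * (‖βy • (u.2 - v.2) - A (u.1 - v.1)‖ + βy * ‖z₁.2 - z₂.2‖) ^ 2) := by
    apply Real.sqrt_le_sqrt
    have e1 : ‖(grad z₁).1 - (grad z₂).1‖ ^ 2
        ≤ (‖βx • (u.1 - v.1) + (ContinuousLinearMap.adjoint A) (u.2 - v.2)‖
            + βx * ‖z₁.1 - z₂.1‖) ^ 2 := pow_le_pow_left₀ (norm_nonneg _) hgb1 2
    have e2 : ‖(grad z₁).2 - (grad z₂).2‖ ^ 2
        ≤ (‖βy • (u.2 - v.2) - A (u.1 - v.1)‖ + βy * ‖z₁.2 - z₂.2‖) ^ 2 :=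
      pow_le_pow_left₀ (norm_nonneg _) hgb2 2
    have f1 := mul_le_mul_of_nonneg_left e1 hγx.le
    have f2 := mul_le_mul_of_nonneg_left e2 hγy.le
    linarith only [f1, f2]
  have step2 := wtri_aux γx γy
    ‖βx • (u.1 - v.1) + (ContinuousLinearMap.adjoint A) (u.2 - v.2)‖ (βx * ‖z₁.1 - z₂.1‖)
    ‖βy • (u.2 - v.2) - A (u.1 - v.1)‖ (βy * ‖z₁.2 - z₂.2‖)
    hγx hγy (norm_nonneg _) (by positivity) (norm_nonneg _) (by positivity)
  have hm0 : 0 ≤ max (βx * γx) (βy * γy) := le_trans (by positivity) (le_max_left _ _)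
  have step3 : Real.sqrt (γx * (βx * ‖z₁.1 - z₂.1‖) ^ 2 + γy * (βy * ‖z₁.2 - z₂.2‖) ^ 2)
      ≤ max (βx * γx) (βy * γy)
        * Real.sqrt (γx⁻¹ * ‖z₁.1 - z₂.1‖ ^ 2 + γy⁻¹ * ‖z₁.2 - z₂.2‖ ^ 2) := by
    have e1 : γx * (βx * ‖z₁.1 - z₂.1‖) ^ 2 = (βx * γx) ^ 2 * (γx⁻¹ * ‖z₁.1 - z₂.1‖ ^ 2) := by
      field_simp
    have e2 : γy * (βy * ‖z₁.2 - z₂.2‖) ^ 2 = (βy * γy) ^ 2 * (γy⁻¹ * ‖z₁.2 - z₂.2‖ ^ 2) := by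
      field_simp
    have m1 : (βx * γx) ^ 2 ≤ max (βx * γx) (βy * γy) ^ 2 :=
      pow_le_pow_left₀ (by positivity) (le_max_left _ _) 2
    have m2 : (βy * γy) ^ 2 ≤ max (βx * γx) (βy * γy) ^ 2 :=
      pow_le_pow_left₀ (by positivity) (le_max_right _ _) 2
    have harg : γx * (βx * ‖z₁.1 - z₂.1‖) ^ 2 + γy * (βy * ‖z₁.2 - z₂.2‖) ^ 2
        ≤ max (βx * γx) (βy * γy) ^ 2
          * (γx⁻¹ * ‖z₁.1 - z₂.1‖ ^ 2 + γy⁻¹ * ‖z₁.2 - z₂.2‖ ^ 2) := by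
      rw [e1, e2]
      have f1 := mul_le_mul_of_nonneg_right m1
        (show 0 ≤ γx⁻¹ * ‖z₁.1 - z₂.1‖ ^ 2 by positivity)
      have f2 := mul_le_mul_of_nonneg_right m2
        (show 0 ≤ γy⁻¹ * ‖z₁.2 - z₂.2‖ ^ 2 by positivity)
      linarith only [f1, f2]
    calc Real.sqrt (γx * (βx * ‖z₁.1 - z₂.1‖) ^ 2 + γy * (βy * ‖z₁.2 - z₂.2‖) ^ 2)
        ≤ Real.sqrt (max (βx * γx) (βy * γy) ^ 2
            * (γx⁻¹ * ‖z₁.1 - z₂.1‖ ^ 2 + γy⁻¹ * ‖z₁.2 - z₂.2‖ ^ 2)) := Real.sqrt_le_sqrt harg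
      _ = max (βx * γx) (βy * γy)
            * Real.sqrt (γx⁻¹ * ‖z₁.1 - z₂.1‖ ^ 2 + γy⁻¹ * ‖z₁.2 - z₂.2‖ ^ 2) := by
          rw [Real.sqrt_mul (by positivity), Real.sqrt_sq hm0]
  linarith only [step1, step2, step3, hN]
end

section
/- For any z, G_β(z) is a convex function of β = (β_x, β_y) ∈ (0,∞)², and its partial derivatives are ∂G_β(z)/∂β_x = -(1/2)‖x - x̄_β(z)‖² and ∂G_β(z)/∂β_y = -(1/2)‖y - ȳ_β(z)‖², where z̄_β(z) = (x̄_β(z), ȳ_β(z)) is the maximizer in the definition of G_β(z). -/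
/-!
`G_β(z)` is a supremum of functions affine in `β`, attained at every `β` of the open quadrant,
hence convex there. For the derivative in `β_x` (the case of `β_y` is symmetric), write the
objective as `c(z') - (t/2)‖x - x'‖²` with `c` concave. Comparing a maximizer with the midpoint
between it and a competitor gives quadratic growth around the maximizer; comparing the maximizers
at `t` and `t₀` then shows `‖x̄_t - x̄_{t₀}‖ = O(|t - t₀|)`. Since each of the two maximizers
competes at the other parameter, `G_t - G_{t₀} + (t - t₀)·½‖x - x̄_{t₀}‖²` lies between `0` and
`(t - t₀)·½(‖x - x̄_{t₀}‖² - ‖x - x̄_t‖²)`, which is `o(t - t₀)` (Danskin's theorem).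
-/

open RealInnerProductSpace

open Set Filter Topology

theorem convexOn_ciSup {E ι : Type*} [AddCommMonoid E] [Module ℝ E] [Nonempty ι]
    {s : Set E} {f : ι → E → ℝ} (hf : ∀ i, ConvexOn ℝ s (f i))
    (hbdd : ∀ x ∈ s, BddAbove (range fun i => f i x)) :
    ConvexOn ℝ s fun x => ⨆ i, f i x := by
  refine ⟨(hf (Classical.arbitrary ι)).1, fun x hx y hy a b ha hb hab => ciSup_le fun i => ?_⟩
  calc f i (a • x + b • y) ≤ a • f i x + b • f i y := (hf i).2 hx hy ha hb hab
    _ ≤ a • (⨆ i, f i x) + b • ⨆ i, f i y :=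
      add_le_add (smul_le_smul_of_nonneg_left (le_ciSup (hbdd x hx) i) ha)
        (smul_le_smul_of_nonneg_left (le_ciSup (hbdd y hy) i) hb)

theorem hasDerivAt_iSup_add_mul {ι : Type*} {c g : ι → ℝ} {w : ℝ → ι} {t₀ : ℝ}
    (hw : ∀ᶠ t in 𝓝 t₀, ∀ i, c i + t * g i ≤ c (w t) + t * g (w t))
    (hg : ContinuousAt (fun t => g (w t)) t₀) :
    HasDerivAt (fun t => ⨆ i, c i + t * g i) (g (w t₀)) t₀ := by
  have hval : ∀ᶠ t in 𝓝 t₀, (⨆ i, c i + t * g i) = c (w t) + t * g (w t) :=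
    hw.mono fun t ht =>
      have : Nonempty ι := ⟨w t⟩
      ciSup_eq_of_forall_le_of_forall_lt_exists_gt ht fun _ h => ⟨w t, h⟩
  have hbound : ∀ᶠ t in 𝓝 t₀,
      ‖(⨆ i, c i + t * g i) - (⨆ i, c i + t₀ * g i) - (t - t₀) • g (w t₀)‖
        ≤ ‖(t - t₀) * (g (w t) - g (w t₀))‖ := by
    filter_upwards [hw, hval] with t ht hvt
    rw [hvt, hval.self_of_nhds, smul_eq_mul, Real.norm_eq_abs, Real.norm_eq_abs]
    -- `w t₀` competes at `t`, and `w t` competes at `t₀`.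
    exact abs_le_abs_of_nonneg (by linear_combination ht (w t₀))
      (by linear_combination hw.self_of_nhds (w t))
  rw [hasDerivAt_iff_isLittleO]
  refine (Asymptotics.IsBigO.of_bound' hbound).trans_isLittleO ?_
  simpa using (Asymptotics.isBigO_refl (fun t => t - t₀) (𝓝 t₀)).mul_isLittleO
    ((Asymptotics.isLittleO_one_iff ℝ).mpr (tendsto_sub_nhds_zero_iff.mpr hg))

theorem ConvexOn.concaveOn_const_sub_add_inner {E₁ E₂ : Type*} [NormedAddCommGroup E₁]
    [InnerProductSpace ℝ E₁] [NormedAddCommGroup E₂] [InnerProductSpace ℝ E₂]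
    {F : E₁ × E₂ → ℝ} (hF : ConvexOn ℝ univ F) (a : ℝ) (p : E₁) (q : E₂) :
    ConcaveOn ℝ univ fun v => a - F v + (⟪p, v.1⟫ + ⟪q, v.2⟫) := by
  refine ⟨convex_univ, fun v _ u _ α β hα hβ hαβ => ?_⟩
  have hFvu := hF.2 (mem_univ v) (mem_univ u) hα hβ hαβ
  simp only [Prod.fst_add, Prod.snd_add, Prod.smul_fst, Prod.smul_snd, inner_add_right,
    real_inner_smul_right, smul_eq_mul] at hFvu ⊢
  linear_combination hFvu + a * hαβ

section QuadraticPenalty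

variable {V E : Type*} [AddCommGroup V] [Module ℝ V] [NormedAddCommGroup E]
  [InnerProductSpace ℝ E] {c : V → ℝ} (P : V →ₗ[ℝ] E) (x : E)

theorem ConcaveOn.sub_mul_sq_norm_sub (hc : ConcaveOn ℝ univ c) {b : ℝ} (hb : 0 ≤ b) :
    ConcaveOn ℝ univ fun v => c v - b / 2 * ‖x - P v‖ ^ 2 := by
  have hconv : ConvexOn ℝ univ fun v => ‖x - P v‖ ^ 2 :=
    ((convexOn_norm convex_univ).pow (fun _ _ => norm_nonneg _) 2).comp_affineMap
      (AffineMap.const ℝ V x - P.toAffineMap)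
  exact hc.sub (hconv.smul (by positivity : 0 ≤ b / 2))

theorem sq_norm_sub_midpoint (v u : V) :
    ‖x - P ((1 / 2 : ℝ) • v + (1 / 2 : ℝ) • u)‖ ^ 2
      = ‖x - P v‖ ^ 2 / 2 + ‖x - P u‖ ^ 2 / 2 - ‖P v - P u‖ ^ 2 / 4 := by
  have hmid : x - P ((1 / 2 : ℝ) • v + (1 / 2 : ℝ) • u)
      = (1 / 2 : ℝ) • ((x - P v) + (x - P u)) := by
    simp only [map_add, map_smul]; module
  have hpar := parallelogram_law_with_norm ℝ (x - P v) (x - P u)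
  rw [show x - P v - (x - P u) = P u - P v by abel, norm_sub_rev] at hpar
  rw [hmid, norm_smul, mul_pow, Real.norm_of_nonneg (by norm_num : (0 : ℝ) ≤ 1 / 2)]
  linarith

-- The maximizer beats the midpoint between itself and `v`.
theorem add_mul_sq_norm_sub_le_of_forall_le (hc : ConcaveOn ℝ univ c) {t : ℝ} {u : V}
    (hu : ∀ v, c v - t / 2 * ‖x - P v‖ ^ 2 ≤ c u - t / 2 * ‖x - P u‖ ^ 2) (v : V) :
    c v - t / 2 * ‖x - P v‖ ^ 2 + t / 4 * ‖P v - P u‖ ^ 2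
      ≤ c u - t / 2 * ‖x - P u‖ ^ 2 := by
  have hcmid : (1 / 2 : ℝ) • c v + (1 / 2 : ℝ) • c u ≤ c ((1 / 2 : ℝ) • v + (1 / 2 : ℝ) • u) :=
    hc.2 (mem_univ v) (mem_univ u) (by norm_num) (by norm_num) (by norm_num)
  have hmid := hu ((1 / 2 : ℝ) • v + (1 / 2 : ℝ) • u)
  rw [sq_norm_sub_midpoint] at hmid
  simp only [smul_eq_mul] at hcmid
  linear_combination 2 * hmid + 2 * hcmid

theorem mul_norm_sub_le_of_forall_le (hc : ConcaveOn ℝ univ c) {t t₀ : ℝ} {u u₀ : V}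
    (hu : ∀ v, c v - t / 2 * ‖x - P v‖ ^ 2 ≤ c u - t / 2 * ‖x - P u‖ ^ 2)
    (hu₀ : ∀ v, c v - t₀ / 2 * ‖x - P v‖ ^ 2 ≤ c u₀ - t₀ / 2 * ‖x - P u₀‖ ^ 2) :
    (3 * t - t₀) / 4 * ‖P u - P u₀‖ ≤ |t - t₀| * ‖x - P u₀‖ := by
  have hgrowth := add_mul_sq_norm_sub_le_of_forall_le P x hc hu u₀
  have hgrowth₀ := add_mul_sq_norm_sub_le_of_forall_le P x hc hu₀ u
  have hexpand :
      ‖x - P u‖ ^ 2 = ‖x - P u₀‖ ^ 2 - 2 * ⟪x - P u₀, P u - P u₀⟫ + ‖P u - P u₀‖ ^ 2 := by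
    rw [show x - P u = (x - P u₀) - (P u - P u₀) by abel, norm_sub_sq_real]
  rw [norm_sub_rev (P u₀), hexpand] at hgrowth
  rw [hexpand] at hgrowth₀
  have hsq : (3 * t - t₀) / 4 * ‖P u - P u₀‖ ^ 2 ≤ (t - t₀) * ⟪x - P u₀, P u - P u₀⟫ := by
    linear_combination hgrowth + hgrowth₀
  have hcs : (t - t₀) * ⟪x - P u₀, P u - P u₀⟫ ≤ |t - t₀| * ‖x - P u₀‖ * ‖P u - P u₀‖ := by
    rw [mul_assoc]
    exact (le_abs_self _).trans ((abs_mul _ _).trans_le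
      (mul_le_mul_of_nonneg_left (abs_real_inner_le_norm _ _) (abs_nonneg _)))
  rcases (norm_nonneg (P u - P u₀)).eq_or_lt with hδ | hδ
  · rw [← hδ, mul_zero]; positivity
  · exact le_of_mul_le_mul_right (by linarith) hδ

theorem continuousAt_map_maximizer (hc : ConcaveOn ℝ univ c) {w : ℝ → V} {t₀ : ℝ}
    (hw : ∀ t, 0 < t → ∀ v, c v - t / 2 * ‖x - P v‖ ^ 2 ≤ c (w t) - t / 2 * ‖x - P (w t)‖ ^ 2)
    (ht₀ : 0 < t₀) :
    ContinuousAt (fun t => P (w t)) t₀ := by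
  rw [ContinuousAt, tendsto_iff_norm_sub_tendsto_zero]
  have hlim : Tendsto (fun t => 4 / t₀ * ‖x - P (w t₀)‖ * |t - t₀|) (𝓝 t₀) (𝓝 0) := by
    have : ContinuousAt (fun t => 4 / t₀ * ‖x - P (w t₀)‖ * |t - t₀|) t₀ := by fun_prop
    simpa using this.tendsto
  refine squeeze_zero' (Eventually.of_forall fun _ => norm_nonneg _) ?_ hlim
  filter_upwards [Ioi_mem_nhds (by linarith : 2 * t₀ / 3 < t₀)] with t ht
  have hlip : t₀ / 4 * ‖P (w t) - P (w t₀)‖ ≤ |t - t₀| * ‖x - P (w t₀)‖ :=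
    (mul_le_mul_of_nonneg_right (by linarith [mem_Ioi.1 ht]) (norm_nonneg _)).trans
      (mul_norm_sub_le_of_forall_le P x hc (hw t (by linarith [mem_Ioi.1 ht])) (hw t₀ ht₀))
  calc ‖P (w t) - P (w t₀)‖ = 4 / t₀ * (t₀ / 4 * ‖P (w t) - P (w t₀)‖) := by field_simp
    _ ≤ 4 / t₀ * (|t - t₀| * ‖x - P (w t₀)‖) := by gcongr
    _ = 4 / t₀ * ‖x - P (w t₀)‖ * |t - t₀| := by ring

theorem hasDerivAt_iSup_sub_mul_sq_norm (hc : ConcaveOn ℝ univ c) {w : ℝ → V} {t₀ : ℝ}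
    (hw : ∀ t, 0 < t → ∀ v, c v - t / 2 * ‖x - P v‖ ^ 2 ≤ c (w t) - t / 2 * ‖x - P (w t)‖ ^ 2)
    (ht₀ : 0 < t₀) :
    HasDerivAt (fun t => ⨆ v, c v - t / 2 * ‖x - P v‖ ^ 2)
      (-(1 / 2) * ‖x - P (w t₀)‖ ^ 2) t₀ := by
  have hform : ∀ t v, c v - t / 2 * ‖x - P v‖ ^ 2 = c v + t * (-(1 / 2) * ‖x - P v‖ ^ 2) :=
    fun _ _ => by ring
  have hPw := continuousAt_map_maximizer P x hc hw ht₀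
  simp only [hform] at hw ⊢
  exact hasDerivAt_iSup_add_mul (eventually_gt_nhds ht₀ |>.mono hw)
    (((continuousAt_const.sub hPw).norm.pow 2).const_mul _)

end QuadraticPenalty

theorem smoothed_gap_convex_in_beta_general {n m : ℕ}
    (F : Eu n × Eu m → ℝ)
    (hF : ConvexOn ℝ Set.univ F)
    (M : Eu n × Eu m →L[ℝ] Eu n × Eu m)
    (z : Eu n × Eu m)
    (zbar : ℝ × ℝ → Eu n × Eu m)
    (hzbar : ∀ βp : ℝ × ℝ, βp ∈ Set.Ioi (0:ℝ) ×ˢ Set.Ioi (0:ℝ) →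
      IsGreatest (Set.range (fun z' : Eu n × Eu m =>
          F z - F z' + (⟪(M z).1, z'.1⟫ + ⟪(M z).2, z'.2⟫)
            - βp.1 / 2 * ‖z.1 - z'.1‖ ^ 2 - βp.2 / 2 * ‖z.2 - z'.2‖ ^ 2))
        (F z - F (zbar βp) + (⟪(M z).1, (zbar βp).1⟫ + ⟪(M z).2, (zbar βp).2⟫)
            - βp.1 / 2 * ‖z.1 - (zbar βp).1‖ ^ 2 - βp.2 / 2 * ‖z.2 - (zbar βp).2‖ ^ 2)) :
    ConvexOn ℝ (Set.Ioi (0:ℝ) ×ˢ Set.Ioi (0:ℝ)) (fun βp : ℝ × ℝ =>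
        ⨆ z' : Eu n × Eu m,
          (F z - F z' + (⟪(M z).1, z'.1⟫ + ⟪(M z).2, z'.2⟫)
            - βp.1 / 2 * ‖z.1 - z'.1‖ ^ 2 - βp.2 / 2 * ‖z.2 - z'.2‖ ^ 2)) ∧
    ∀ βx βy : ℝ, 0 < βx → 0 < βy →
      HasDerivAt (fun t : ℝ =>
          ⨆ z' : Eu n × Eu m,
            (F z - F z' + (⟪(M z).1, z'.1⟫ + ⟪(M z).2, z'.2⟫)
              - t / 2 * ‖z.1 - z'.1‖ ^ 2 - βy / 2 * ‖z.2 - z'.2‖ ^ 2))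
        (-(1 / 2) * ‖z.1 - (zbar (βx, βy)).1‖ ^ 2) βx ∧
      HasDerivAt (fun t : ℝ =>
          ⨆ z' : Eu n × Eu m,
            (F z - F z' + (⟪(M z).1, z'.1⟫ + ⟪(M z).2, z'.2⟫)
              - βx / 2 * ‖z.1 - z'.1‖ ^ 2 - t / 2 * ‖z.2 - z'.2‖ ^ 2))
        (-(1 / 2) * ‖z.2 - (zbar (βx, βy)).2‖ ^ 2) βy := by
  have hℓ := hF.concaveOn_const_sub_add_inner (F z) (M z).1 (M z).2
  refine ⟨convexOn_ciSup (fun v => ?_) (fun βp hβp => (hzbar βp hβp).bddAbove),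
    fun βx βy hβx hβy => ⟨?_, ?_⟩⟩
  · refine ⟨(convex_Ioi 0).prod (convex_Ioi 0), fun p _ q _ a b _ _ hab => le_of_eq ?_⟩
    simp only [Prod.fst_add, Prod.snd_add, Prod.smul_fst, Prod.smul_snd, smul_eq_mul]
    linear_combination (-(F z - F v + (⟪(M z).1, v.1⟫ + ⟪(M z).2, v.2⟫))) * hab
  · have hswap : ∀ t (v : Eu n × Eu m),
        F z - F v + (⟪(M z).1, v.1⟫ + ⟪(M z).2, v.2⟫) - t / 2 * ‖z.1 - v.1‖ ^ 2
            - βy / 2 * ‖z.2 - v.2‖ ^ 2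
          = F z - F v + (⟪(M z).1, v.1⟫ + ⟪(M z).2, v.2⟫) - βy / 2 * ‖z.2 - v.2‖ ^ 2
            - t / 2 * ‖z.1 - v.1‖ ^ 2 := fun _ _ => sub_right_comm _ _ _
    simp only [hswap]
    simpa only [LinearMap.fst_apply, LinearMap.snd_apply] using
      hasDerivAt_iSup_sub_mul_sq_norm (LinearMap.fst ℝ _ _) z.1
        (hℓ.sub_mul_sq_norm_sub (LinearMap.snd ℝ _ _) z.2 hβy.le) (w := fun t => zbar (t, βy))
        (fun t ht v => by
          simpa only [LinearMap.fst_apply, LinearMap.snd_apply, hswap] using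
            (hzbar (t, βy) ⟨ht, hβy⟩).2 ⟨v, rfl⟩) hβx
  · simpa only [LinearMap.fst_apply, LinearMap.snd_apply] using
      hasDerivAt_iSup_sub_mul_sq_norm (LinearMap.snd ℝ _ _) z.2
        (hℓ.sub_mul_sq_norm_sub (LinearMap.fst ℝ _ _) z.1 hβx.le) (w := fun t => zbar (βx, t))
        (fun t ht v => by
          simpa only [LinearMap.fst_apply, LinearMap.snd_apply] using
            (hzbar (βx, t) ⟨hβx, ht⟩).2 ⟨v, rfl⟩) hβy

/-- For fixed `z`, `β ↦ G_β(z)` is convex on `(0,∞)²` and its partial derivatives are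
`∂G_β(z)/∂β_x = -½‖x - x̄_β(z)‖²` and `∂G_β(z)/∂β_y = -½‖y - ȳ_β(z)‖²`, where
`z̄_β(z)` is the maximizer defining `G_β(z)`. -/
theorem smoothed_gap_convex_in_beta {n m : ℕ}
    (F : Eu n × Eu m → ℝ)
    (hF : ConvexOn ℝ Set.univ F) (hFlsc : LowerSemicontinuous F)
    (M : Eu n × Eu m →L[ℝ] Eu n × Eu m)
    (z : Eu n × Eu m)
    (zbar : ℝ × ℝ → Eu n × Eu m)
    (hzbar : ∀ βp : ℝ × ℝ, βp ∈ Set.Ioi (0:ℝ) ×ˢ Set.Ioi (0:ℝ) →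
      IsGreatest (Set.range (fun z' : Eu n × Eu m =>
          F z - F z' + (⟪(M z).1, z'.1⟫ + ⟪(M z).2, z'.2⟫)
            - βp.1 / 2 * ‖z.1 - z'.1‖ ^ 2 - βp.2 / 2 * ‖z.2 - z'.2‖ ^ 2))
        (F z - F (zbar βp) + (⟪(M z).1, (zbar βp).1⟫ + ⟪(M z).2, (zbar βp).2⟫)
            - βp.1 / 2 * ‖z.1 - (zbar βp).1‖ ^ 2 - βp.2 / 2 * ‖z.2 - (zbar βp).2‖ ^ 2)) :
    ConvexOn ℝ (Set.Ioi (0:ℝ) ×ˢ Set.Ioi (0:ℝ)) (fun βp : ℝ × ℝ =>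
        ⨆ z' : Eu n × Eu m,
          (F z - F z' + (⟪(M z).1, z'.1⟫ + ⟪(M z).2, z'.2⟫)
            - βp.1 / 2 * ‖z.1 - z'.1‖ ^ 2 - βp.2 / 2 * ‖z.2 - z'.2‖ ^ 2)) ∧
    ∀ βx βy : ℝ, 0 < βx → 0 < βy →
      HasDerivAt (fun t : ℝ =>
          ⨆ z' : Eu n × Eu m,
            (F z - F z' + (⟪(M z).1, z'.1⟫ + ⟪(M z).2, z'.2⟫)
              - t / 2 * ‖z.1 - z'.1‖ ^ 2 - βy / 2 * ‖z.2 - z'.2‖ ^ 2))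
        (-(1 / 2) * ‖z.1 - (zbar (βx, βy)).1‖ ^ 2) βx ∧
      HasDerivAt (fun t : ℝ =>
          ⨆ z' : Eu n × Eu m,
            (F z - F z' + (⟪(M z).1, z'.1⟫ + ⟪(M z).2, z'.2⟫)
              - βx / 2 * ‖z.1 - z'.1‖ ^ 2 - t / 2 * ‖z.2 - z'.2‖ ^ 2))
        (-(1 / 2) * ‖z.2 - (zbar (βx, βy)).2‖ ^ 2) βy :=
  smoothed_gap_convex_in_beta_general F hF M z zbar hzbar
end

section
/- One-step optimality inequality: if z₊ = prox_{γF}(z - γ∇F*_{β,M}(z)) with γ ≤ 1/L, L a Lipschitz constant of ∇F*_{β,M}, and F*_{β,M} is β-weakly convex (i.e., F*_{β,M} + (1/2)‖·‖²_β convex), then for any saddle point z* (so G_β(z*) = 0), G_β(z₊) ≤ (β_max/2 + 1/(2γ))‖z - z*‖² - (1/(2γ))‖z₊ - z*‖², where β_max = max(β_x, β_y). -/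
open Set Filter Topology InnerProductSpace
open scoped RealInnerProductSpace

section Helpers

variable {E : Type*} [NormedAddCommGroup E] [InnerProductSpace ℝ E]

/-- Expansion of `‖x + t • y‖²`. -/
lemma norm_add_smul_sq (x y : E) (t : ℝ) :
    ‖x + t • y‖ ^ 2 = ‖x‖ ^ 2 + 2 * ⟪x, y⟫_ℝ * t + ‖y‖ ^ 2 * t ^ 2 := by
  rw [norm_add_sq_real, real_inner_smul_right, norm_smul]
  simp [mul_pow, sq_abs]
  ring

/-- Gradient inequality for a convex function along a line, from differentiability at 0. -/
lemma convexOn_line_ineq (h : E → ℝ) (hc : ConvexOn ℝ Set.univ h) (z d : E) (D : ℝ)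
    (hD : HasDerivAt (fun t : ℝ => h (z + t • d)) D 0) :
    h z + D ≤ h (z + d) := by
  set g : ℝ → ℝ := fun t => h (z + t • d) with hg
  have hgc : ConvexOn ℝ Set.univ g := by
    refine ⟨convex_univ, fun x _ y _ a b ha hb hab => ?_⟩
    have hpt : z + (a • x + b • y) • d = a • (z + x • d) + b • (z + y • d) := by
      rw [show z + (a • x + b • y) • d = (a + b) • z + (a • x + b • y) • d from by
        rw [hab, one_smul]]
      simp only [smul_eq_mul]
      module
    simp only [hg, hpt]
    exact hc.2 (mem_univ _) (mem_univ _) ha hb hab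
  have hkey : D ≤ g 1 - g 0 := by
    have ht : Tendsto (slope g 0) (𝓝[>] (0:ℝ)) (𝓝 D) :=
      (hasDerivAt_iff_tendsto_slope.mp hD).mono_left
        (nhdsWithin_mono _ (fun x hx => ne_of_gt hx))
    refine le_of_tendsto ht ?_
    filter_upwards [Ioo_mem_nhdsGT_of_mem (by constructor <;> norm_num : (0:ℝ) ∈ Ico 0 1)]
      with t ht'
    have := hgc.secant_mono (a := (0:ℝ)) (x := t) (y := 1) (mem_univ _) (mem_univ _)
      (mem_univ _) (ne_of_gt ht'.1) one_ne_zero ht'.2.le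
    simpa [slope_def_field, div_eq_inv_mul] using this
  have h0 : g 0 = h z := by simp [hg]
  have h1 : g 1 = h (z + d) := by simp [hg]
  linarith [hkey, h0.symm ▸ h1.symm ▸ hkey]

variable [CompleteSpace E]

lemma hasDerivAt_line (Fs : E → ℝ) (grad : E → E)
    (hdiff : ∀ w, HasGradientAt Fs (grad w) w) (z d : E) (t : ℝ) :
    HasDerivAt (fun s : ℝ => Fs (z + s • d)) ⟪grad (z + t • d), d⟫_ℝ t := by
  have h1 : HasDerivAt (fun s : ℝ => z + s • d) d t := by
    simpa using ((hasDerivAt_id t).smul_const d).const_add z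
  have h2 := ((hdiff (z + t • d)).hasFDerivAt).comp_hasDerivAt t h1
  simp [InnerProductSpace.toDual_apply_apply] at h2
  exact h2

/-- Descent lemma. -/
lemma descent_lemma (Fs : E → ℝ) (grad : E → E)
    (hdiff : ∀ w, HasGradientAt Fs (grad w) w) (L : ℝ)
    (hlip : ∀ w₁ w₂ : E, ‖grad w₁ - grad w₂‖ ≤ L * ‖w₁ - w₂‖) (z d : E) :
    Fs (z + d) ≤ Fs z + ⟪grad z, d⟫_ℝ + L / 2 * ‖d‖ ^ 2 := by
  set c1 : ℝ := ⟪grad z, d⟫_ℝ with hc1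
  set ψ : ℝ → ℝ := fun t => Fs (z + t • d) - c1 * t - L / 2 * ‖d‖ ^ 2 * t ^ 2 with hψ
  have hψ' : ∀ t : ℝ, HasDerivAt ψ (⟪grad (z + t • d), d⟫_ℝ - c1 - L * ‖d‖ ^ 2 * t) t := by
    intro t
    have h1 := (hasDerivAt_line Fs grad hdiff z d t).sub
      ((hasDerivAt_id t).const_mul c1)
    have h2 := h1.sub (((hasDerivAt_pow 2 t)).const_mul (L / 2 * ‖d‖ ^ 2))
    exact h2.congr_deriv (by simp only [Nat.cast_ofNat]; ring)
  have hmono : AntitoneOn ψ (Icc 0 1) := by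
    apply antitoneOn_of_deriv_nonpos (convex_Icc 0 1)
    · exact (Differentiable.continuous (fun t => (hψ' t).differentiableAt)).continuousOn
    · exact (Differentiable.differentiableOn (fun t => (hψ' t).differentiableAt))
    · intro x hx
      rw [interior_Icc] at hx
      rw [(hψ' x).deriv]
      have hb : ⟪grad (z + x • d) - grad z, d⟫_ℝ ≤ ‖grad (z + x • d) - grad z‖ * ‖d‖ :=
        real_inner_le_norm _ _
      have hlb : ‖grad (z + x • d) - grad z‖ ≤ L * (x * ‖d‖) := by
        have := hlip (z + x • d) z
        simpa [norm_smul, abs_of_pos hx.1] using this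
      have hin : ⟪grad (z + x • d), d⟫_ℝ - c1 = ⟪grad (z + x • d) - grad z, d⟫_ℝ := by
        rw [inner_sub_left]
      nlinarith [norm_nonneg d, norm_nonneg (grad (z + x • d) - grad z)]
  have h10 := hmono (by constructor <;> norm_num) (by constructor <;> norm_num)
    (by norm_num : (0:ℝ) ≤ 1)
  simp only [hψ, zero_smul, add_zero, one_smul, mul_zero, mul_one, sub_zero, one_pow] at h10
  linarith

end Helpers

/-- `ℝⁿ × ℝᵐ` with the Euclidean (ℓ²-product) structure. -/
abbrev EuProd (n m : ℕ) :=
  WithLp 2 (EuclideanSpace ℝ (Fin n) × EuclideanSpace ℝ (Fin m))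

/-- First component. -/
def pr1 {n m : ℕ} (z : EuProd n m) : EuclideanSpace ℝ (Fin n) :=
  (WithLp.equiv 2 (EuclideanSpace ℝ (Fin n) × EuclideanSpace ℝ (Fin m)) z).1

/-- Second component. -/
def pr2 {n m : ℕ} (z : EuProd n m) : EuclideanSpace ℝ (Fin m) :=
  (WithLp.equiv 2 (EuclideanSpace ℝ (Fin n) × EuclideanSpace ℝ (Fin m)) z).2

set_option maxHeartbeats 1000000 in
/-- One-step optimality inequality for the proximal gradient on the smoothed gap:
if `z₊ = prox_{γF}(z - γ∇F*_{β,M}(z))` with `γ ≤ 1/L`, `F*_{β,M}` is `β`-weakly convex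
(`F*_{β,M} + ½‖·‖²_β` convex) and `z*` is a saddle point (so `G_β ≥ 0` and `G_β(z*) = 0`
where `G_β = F + F*_{β,M}`), then
`G_β(z₊) ≤ (β_max/2 + 1/(2γ))‖z - z*‖² - (1/(2γ))‖z₊ - z*‖²`, `β_max = max(β_x, β_y)`. -/
theorem prox_grad_optimality_step {n m : ℕ}
    (F : EuProd n m → ℝ) (hF : ConvexOn ℝ Set.univ F) (hFlsc : LowerSemicontinuous F)
    (Fstar : EuProd n m → ℝ) (grad : EuProd n m → EuProd n m)
    (hdiff : ∀ w, HasGradientAt Fstar (grad w) w)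
    (L : ℝ) (hL : 0 < L)
    (hlip : ∀ w₁ w₂ : EuProd n m, ‖grad w₁ - grad w₂‖ ≤ L * ‖w₁ - w₂‖)
    (βx βy : ℝ) (hβx : 0 < βx) (hβy : 0 < βy)
    (hweak : ConvexOn ℝ Set.univ
      (fun w : EuProd n m => Fstar w + 1 / 2 * (βx * ‖pr1 w‖ ^ 2 + βy * ‖pr2 w‖ ^ 2)))
    (hG_nonneg : ∀ w, 0 ≤ F w + Fstar w)
    (zstar : EuProd n m) (hstar : F zstar + Fstar zstar = 0)
    (γ : ℝ) (hγ : 0 < γ) (hγL : γ ≤ 1 / L)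
    (z zplus : EuProd n m)
    (hprox : ∀ v : EuProd n m,
      F zplus + 1 / (2 * γ) * ‖zplus - (z - γ • grad z)‖ ^ 2 ≤
        F v + 1 / (2 * γ) * ‖v - (z - γ • grad z)‖ ^ 2) :
    F zplus + Fstar zplus ≤
      (max βx βy / 2 + 1 / (2 * γ)) * ‖z - zstar‖ ^ 2 - 1 / (2 * γ) * ‖zplus - zstar‖ ^ 2 := by
  set a : EuProd n m := zplus - z with ha
  set b : EuProd n m := zstar - z with hb
  have hza : z + a = zplus := by rw [ha]; abel
  have hzb : z + b = zstar := by rw [hb]; abel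
  -- descent lemma
  have hdes : Fstar zplus ≤ Fstar z + ⟪grad z, a⟫_ℝ + L / 2 * ‖a‖ ^ 2 := by
    have := descent_lemma Fstar grad hdiff L hlip z a
    rwa [hza] at this
  -- weak convexity inequality
  set q : EuProd n m → ℝ := fun w => 1 / 2 * (βx * ‖pr1 w‖ ^ 2 + βy * ‖pr2 w‖ ^ 2) with hq
  set Db : ℝ := βx * ⟪pr1 z, pr1 b⟫_ℝ + βy * ⟪pr2 z, pr2 b⟫_ℝ with hDb
  have hqline : ∀ t : ℝ, q (z + t • b) = q z + Db * t + q b * t ^ 2 := by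
    intro t
    have e1 : pr1 (z + t • b) = pr1 z + t • pr1 b := rfl
    have e2 : pr2 (z + t • b) = pr2 z + t • pr2 b := rfl
    simp only [hq, e1, e2, norm_add_smul_sq, hDb]
    ring
  have hder : HasDerivAt (fun t : ℝ => Fstar (z + t • b) + q (z + t • b))
      (⟪grad z, b⟫_ℝ + Db) 0 := by
    have h1 : HasDerivAt (fun t : ℝ => Fstar (z + t • b)) ⟪grad z, b⟫_ℝ 0 := by
      simpa using hasDerivAt_line Fstar grad hdiff z b 0
    have h2 : HasDerivAt (fun t : ℝ => q (z + t • b)) Db 0 := by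
      have hf : (fun t : ℝ => q (z + t • b)) = fun t => q z + Db * t + q b * t ^ 2 :=
        funext hqline
      rw [hf]
      have h3 := (((hasDerivAt_id (0:ℝ)).const_mul Db).const_add (q z)).add
        ((hasDerivAt_pow 2 (0:ℝ)).const_mul (q b))
      simp at h3
      exact h3
    exact h1.add h2
  have hwk : Fstar z + q z + (⟪grad z, b⟫_ℝ + Db) ≤ Fstar (z + b) + q (z + b) :=
    convexOn_line_ineq (fun w => Fstar w + q w) hweak z b _ hder
  rw [hzb] at hwk
  have hq1 : q zstar = q z + Db + q b := by
    have := hqline 1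
    rw [one_smul, hzb] at this
    simpa using this
  have hweakineq : Fstar z + ⟪grad z, b⟫_ℝ ≤ Fstar zstar + q b := by
    rw [hq1] at hwk; linarith
  have hqb : q b ≤ max βx βy / 2 * ‖b‖ ^ 2 := by
    have hnb : ‖b‖ ^ 2 = ‖pr1 b‖ ^ 2 + ‖pr2 b‖ ^ 2 :=
      WithLp.prod_norm_sq_eq_of_L2 b
    have h1 : βx ≤ max βx βy := le_max_left _ _
    have h2 : βy ≤ max βx βy := le_max_right _ _
    rw [hq, hnb]
    nlinarith [sq_nonneg ‖pr1 b‖, sq_nonneg ‖pr2 b‖]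
  -- three-point prox inequality
  set v : EuProd n m := z - γ • grad z with hv
  set S : ℝ := ⟪zplus - v, zstar - zplus⟫_ℝ with hSdef
  set c : ℝ := ‖zstar - zplus‖ ^ 2 with hcdef
  have hc0 : 0 ≤ c := by rw [hcdef]; positivity
  have hk : (0:ℝ) < 1 / (2 * γ) := by positivity
  have step : ∀ t ∈ Ioc (0:ℝ) 1,
      F zplus ≤ F zstar + 2 * (1 / (2 * γ)) * S + t * (1 / (2 * γ) * c) := by
    intro t ht
    have hut : zplus + t • (zstar - zplus) = (1 - t) • zplus + t • zstar := by module
    have hcv : F ((1 - t) • zplus + t • zstar) ≤ (1 - t) * F zplus + t * F zstar := by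
      have := hF.2 (mem_univ zplus) (mem_univ zstar)
        (by linarith [ht.2] : (0:ℝ) ≤ 1 - t) ht.1.le (by ring)
      simpa [smul_eq_mul] using this
    have hnorm : ‖zplus + t • (zstar - zplus) - v‖ ^ 2
        = ‖zplus - v‖ ^ 2 + 2 * S * t + c * t ^ 2 := by
      rw [show zplus + t • (zstar - zplus) - v = (zplus - v) + t • (zstar - zplus) from by
        module]
      rw [norm_add_smul_sq, hSdef, hcdef]
    have hp := hprox (zplus + t • (zstar - zplus))
    rw [hnorm, hut] at hp
    have h5 : t * F zplus ≤ t * (F zstar + 2 * (1 / (2 * γ)) * S + t * (1 / (2 * γ) * c)) := by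
      nlinarith [hp, hcv]
    exact le_of_mul_le_mul_left h5 ht.1
  have hthree : F zplus ≤ F zstar + 2 * (1 / (2 * γ)) * S := by
    have hcont : Continuous fun t : ℝ =>
        F zstar + 2 * (1 / (2 * γ)) * S + t * (1 / (2 * γ) * c) :=
      continuous_const.add (continuous_id.mul continuous_const)
    have htend : Tendsto (fun t : ℝ =>
        F zstar + 2 * (1 / (2 * γ)) * S + t * (1 / (2 * γ) * c)) (𝓝[>] 0)
        (𝓝 (F zstar + 2 * (1 / (2 * γ)) * S)) := by
      have h0 : Tendsto (fun t : ℝ =>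
          F zstar + 2 * (1 / (2 * γ)) * S + t * (1 / (2 * γ) * c)) (𝓝 0)
          (𝓝 (F zstar + 2 * (1 / (2 * γ)) * S)) := by
        have h1 := hcont.tendsto 0
        simpa using h1
      exact h0.mono_left nhdsWithin_le_nhds
    refine ge_of_tendsto htend ?_
    filter_upwards [Ioc_mem_nhdsGT_of_mem (by constructor <;> norm_num : (0:ℝ) ∈ Ico 0 1)]
      with t ht using step t ht
  -- rewrite S
  have hS : S = ⟪a, b - a⟫_ℝ + γ * (⟪grad z, b⟫_ℝ - ⟪grad z, a⟫_ℝ) := by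
    have e : zplus - v = a + γ • grad z := by rw [hv, ha]; module
    have e' : zstar - zplus = b - a := by rw [ha, hb]; abel
    rw [hSdef, e, e']
    simp only [inner_add_left, inner_sub_right, real_inner_smul_left]
    ring
  have he2 : 2 * ⟪a, b - a⟫_ℝ = ‖b‖ ^ 2 - ‖a‖ ^ 2 - ‖b - a‖ ^ 2 := by
    have h1 := norm_sub_sq_real b a
    have h2 : ⟪a, b - a⟫_ℝ = ⟪a, b⟫_ℝ - ⟪a, a⟫_ℝ := inner_sub_right _ _ _
    have h3 : ⟪a, a⟫_ℝ = ‖a‖ ^ 2 := real_inner_self_eq_norm_sq a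
    have h4 : ⟪b, a⟫_ℝ = ⟪a, b⟫_ℝ := real_inner_comm a b
    linarith
  have hexp : 2 * (1 / (2 * γ)) * S
      = 1 / (2 * γ) * ‖b‖ ^ 2 - 1 / (2 * γ) * ‖a‖ ^ 2 - 1 / (2 * γ) * ‖b - a‖ ^ 2
        + (⟪grad z, b⟫_ℝ - ⟪grad z, a⟫_ℝ) := by
    have hγ' : γ ≠ 0 := ne_of_gt hγ
    have hI : ⟪a, b - a⟫_ℝ = (‖b‖ ^ 2 - ‖a‖ ^ 2 - ‖b - a‖ ^ 2) / 2 := by linarith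
    rw [hS, hI]
    field_simp
  rw [hexp] at hthree
  -- Lipschitz constant bound
  have hLγ : L / 2 * ‖a‖ ^ 2 ≤ 1 / (2 * γ) * ‖a‖ ^ 2 := by
    have h1 : γ * L ≤ 1 := (le_div_iff₀ hL).mp hγL
    have h2 : L / 2 ≤ 1 / (2 * γ) := by
      rw [div_le_div_iff₀ (by norm_num) (by positivity)]
      nlinarith
    exact mul_le_mul_of_nonneg_right h2 (sq_nonneg _)
  -- final
  have hnb : ‖z - zstar‖ = ‖b‖ := by rw [hb, norm_sub_rev]
  have hnba : ‖zplus - zstar‖ = ‖b - a‖ := by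
    rw [show b - a = zstar - zplus from by rw [hb, ha]; abel, norm_sub_rev]
  rw [hnb, hnba]
  have hsplit : (max βx βy / 2 + 1 / (2 * γ)) * ‖b‖ ^ 2
      = max βx βy / 2 * ‖b‖ ^ 2 + 1 / (2 * γ) * ‖b‖ ^ 2 := by ring
  rw [hsplit]
  linarith [hdes, hweakineq, hqb, hthree, hLγ, hstar]
end

section
/- Telescoping product lower bound: with β_j = β₀ b^{1/2}/(j+b)^{1/2} and b ≥ 1/((3/2)²-1), for all integers 1 ≤ l ≤ K, ∏_{j=l}^K (2 - β_j/β_{j+1}) ≥ ((l+b-1)/(K+b))^{1/2} · exp(-1/(3(l+b-1)²)) ≥ exp(-1/(3b²)) · β_K/β_{l-1}. -/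
lemma step_aux_tele (y : ℝ) (hy : 1 ≤ y) :
    Real.sqrt ((y - 1) / y) + Real.sqrt ((y + 1) / y) ≤ 2 := by
  have hy0 : 0 < y := by linarith
  set A := Real.sqrt ((y - 1) / y) with hA
  set C := Real.sqrt ((y + 1) / y) with hC
  have hA0 : 0 ≤ A := Real.sqrt_nonneg _
  have hC0 : 0 ≤ C := Real.sqrt_nonneg _
  have hA2 : A ^ 2 = (y - 1) / y := Real.sq_sqrt (div_nonneg (by linarith) (by linarith))
  have hC2 : C ^ 2 = (y + 1) / y := Real.sq_sqrt (by positivity)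
  have hAC : A * C ≤ 1 := by
    rw [hA, hC, ← Real.sqrt_mul (div_nonneg (by linarith) (by linarith))]
    have harg : ((y - 1) / y) * ((y + 1) / y) ≤ 1 := by
      rw [div_mul_div_comm, div_le_one (by positivity)]
      nlinarith
    calc Real.sqrt (((y - 1) / y) * ((y + 1) / y)) ≤ Real.sqrt 1 :=
          Real.sqrt_le_sqrt harg
      _ = 1 := Real.sqrt_one
  have hsum : A ^ 2 + C ^ 2 = 2 := by
    rw [hA2, hC2]; field_simp; ring
  nlinarith [sq_nonneg (A + C - 2)]

/-- Telescoping product lower bound: with `β_j = β₀ √b / √(j+b)` and `b ≥ 1/((3/2)²-1)`,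
for all `1 ≤ l ≤ K`,
`∏_{j=l}^K (2 - β_j/β_{j+1}) ≥ ((l+b-1)/(K+b))^{1/2} exp(-1/(3(l+b-1)²)) ≥ exp(-1/(3b²)) β_K/β_{l-1}`. -/
theorem telescoping_product_lower_bound (β₀ b : ℝ) (hβ₀ : 0 < β₀)
    (hb : 1 / ((3 / 2 : ℝ) ^ 2 - 1) ≤ b)
    (β : ℕ → ℝ) (hβ : ∀ j : ℕ, β j = β₀ * Real.sqrt b / Real.sqrt ((j : ℝ) + b))
    (l K : ℕ) (hl : 1 ≤ l) (hlK : l ≤ K) :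
    Real.sqrt (((l : ℝ) + b - 1) / ((K : ℝ) + b)) *
        Real.exp (-1 / (3 * ((l : ℝ) + b - 1) ^ 2)) ≤
      ∏ j ∈ Finset.Icc l K, (2 - β j / β (j + 1)) ∧
    Real.exp (-1 / (3 * b ^ 2)) * (β K / β (l - 1)) ≤
      Real.sqrt (((l : ℝ) + b - 1) / ((K : ℝ) + b)) *
        Real.exp (-1 / (3 * ((l : ℝ) + b - 1) ^ 2)) := by
  have hb0 : (4:ℝ)/5 ≤ b := by norm_num at hb; linarith
  have hbpos : (0:ℝ) < b := by linarith
  have hl1 : (1:ℝ) ≤ (l:ℝ) := by exact_mod_cast hl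
  -- ratio formula
  have hratio : ∀ j : ℕ, β j / β (j + 1) =
      Real.sqrt (((j:ℝ) + 1 + b) / ((j:ℝ) + b)) := by
    intro j
    have h1 : (0:ℝ) < (j:ℝ) + b := by positivity
    have h2 : (0:ℝ) < (j:ℝ) + 1 + b := by positivity
    rw [hβ j, hβ (j + 1)]
    push_cast
    rw [Real.sqrt_div (le_of_lt h2)]
    have hs1 : Real.sqrt ((j:ℝ) + b) ≠ 0 := by positivity
    have hs2 : Real.sqrt ((j:ℝ) + 1 + b) ≠ 0 := by positivity
    have hsb : Real.sqrt b ≠ 0 := by positivity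
    field_simp
  -- main product lower bound by induction
  have main : ∀ M : ℕ, l ≤ M →
      Real.sqrt (((l:ℝ) + b - 1) / ((M:ℝ) + b)) ≤
        ∏ j ∈ Finset.Icc l M, (2 - β j / β (j + 1)) := by
    intro M hM
    induction M, hM using Nat.le_induction with
    | base =>
      rw [Finset.Icc_self, Finset.prod_singleton, hratio l]
      have hstep := step_aux_tele ((l:ℝ) + b) (by linarith)
      have e1 : (l:ℝ) + b - 1 = ((l:ℝ) + b) - 1 := by ring
      have e2 : (l:ℝ) + 1 + b = ((l:ℝ) + b) + 1 := by ring
      rw [e1, e2]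
      linarith
    | succ M hM ih =>
      rw [Finset.prod_Icc_succ_top (Nat.le_succ_of_le hM)]
      have hstep := step_aux_tele (((M:ℝ) + 1) + b) (by
        have : (0:ℝ) ≤ (M:ℝ) := Nat.cast_nonneg M
        linarith)
      have hfac : Real.sqrt (((M:ℝ) + b) / ((M:ℝ) + 1 + b)) ≤
          2 - β (M + 1) / β (M + 1 + 1) := by
        rw [hratio (M + 1)]
        push_cast
        have e1 : (M:ℝ) + b = (((M:ℝ) + 1) + b) - 1 := by ring
        have e2 : (M:ℝ) + 1 + 1 + b = (((M:ℝ) + 1) + b) + 1 := by ring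
        have e3 : (M:ℝ) + 1 + b = ((M:ℝ) + 1) + b := by ring
        rw [e1, e2, e3]
        linarith
      have hMb : (0:ℝ) < (M:ℝ) + b := by positivity
      have hM1b : (0:ℝ) < (M:ℝ) + 1 + b := by positivity
      have hlb1 : (0:ℝ) ≤ (l:ℝ) + b - 1 := by linarith
      have hsplit : Real.sqrt (((l:ℝ) + b - 1) / (((M:ℕ):ℝ) + 1 + b)) =
          Real.sqrt (((l:ℝ) + b - 1) / ((M:ℝ) + b)) *
            Real.sqrt (((M:ℝ) + b) / ((M:ℝ) + 1 + b)) := by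
        rw [← Real.sqrt_mul (by positivity)]
        congr 1
        field_simp
      have hcast : ((M + 1 : ℕ):ℝ) + b = (M:ℝ) + 1 + b := by push_cast; ring
      rw [hcast, hsplit]
      have hprodnn : (0:ℝ) ≤ Real.sqrt (((l:ℝ) + b - 1) / ((M:ℝ) + b)) :=
        Real.sqrt_nonneg _
      exact mul_le_mul ih hfac (Real.sqrt_nonneg _) (le_trans hprodnn ih)
  constructor
  · have hexp1 : Real.exp (-1 / (3 * ((l:ℝ) + b - 1) ^ 2)) ≤ 1 := by
      rw [Real.exp_le_one_iff]
      have hpos : (0:ℝ) < 3 * ((l:ℝ) + b - 1) ^ 2 := by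
        have : (0:ℝ) < (l:ℝ) + b - 1 := by linarith
        positivity
      rw [neg_div]
      simp only [neg_nonpos]
      positivity
    calc Real.sqrt (((l:ℝ) + b - 1) / ((K:ℝ) + b)) *
          Real.exp (-1 / (3 * ((l:ℝ) + b - 1) ^ 2))
        ≤ Real.sqrt (((l:ℝ) + b - 1) / ((K:ℝ) + b)) * 1 :=
          mul_le_mul_of_nonneg_left hexp1 (Real.sqrt_nonneg _)
      _ = Real.sqrt (((l:ℝ) + b - 1) / ((K:ℝ) + b)) := by ring
      _ ≤ ∏ j ∈ Finset.Icc l K, (2 - β j / β (j + 1)) := main K hlK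
  · have hβ2 : β K / β (l - 1) = Real.sqrt (((l:ℝ) + b - 1) / ((K:ℝ) + b)) := by
      rw [hβ K, hβ (l - 1)]
      have hcast : ((l - 1 : ℕ):ℝ) = (l:ℝ) - 1 := by
        rw [Nat.cast_sub hl, Nat.cast_one]
      rw [hcast]
      have h1 : (0:ℝ) < (K:ℝ) + b := by positivity
      have h2 : (0:ℝ) < (l:ℝ) - 1 + b := by linarith
      have e : (l:ℝ) + b - 1 = (l:ℝ) - 1 + b := by ring
      rw [e, Real.sqrt_div (le_of_lt h2)]
      have hs1 : Real.sqrt ((K:ℝ) + b) ≠ 0 := by positivity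
      have hs2 : Real.sqrt ((l:ℝ) - 1 + b) ≠ 0 := by positivity
      have hsb : Real.sqrt b ≠ 0 := by positivity
      field_simp
    rw [hβ2, mul_comm]
    apply mul_le_mul_of_nonneg_left _ (Real.sqrt_nonneg _)
    rw [Real.exp_le_exp]
    have h1 : (0:ℝ) < 3 * b ^ 2 := by positivity
    have h2 : 3 * b ^ 2 ≤ 3 * ((l:ℝ) + b - 1) ^ 2 := by nlinarith
    have h3 : 1 / (3 * ((l:ℝ) + b - 1) ^ 2) ≤ 1 / (3 * b ^ 2) :=
      one_div_le_one_div_of_le h1 h2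
    rw [neg_div, neg_div]
    exact neg_le_neg h3
end

section
/- Monotone comparison of acceleration parameters: if b ≥ t ≥ 2 and k ≥ 1 is an integer, then k(k+b-1)/((k+t)(k+b-2)) ≤ (k+b-1)/(k+b), and (k+t-1)²(k+b)/((k+t)²(k+b-1)) ≤ (k+b-1)/(k+b); consequently ∏_{k=1}^K max of these three ratios times (k+c+c̄)/(k+c) is at most (b/(K+b))·(K/c+1)^{c̄} for c ≥ 1, 0 < c̄ < 1. -/
open Finset

private lemma key_rpow (cbar x : ℝ) (h0 : 0 < cbar) (h1 : cbar ≤ 1) (hx : 2 ≤ x) :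
    (x + cbar) / x ≤ (x / (x - 1)) ^ cbar := by
  have hx0 : (0:ℝ) < x := by linarith
  have hx1 : (0:ℝ) < x - 1 := by linarith
  have hy : (0:ℝ) < x / (x - 1) := div_pos hx0 hx1
  have hlog1 : Real.log ((x - 1) / x) ≤ (x - 1) / x - 1 :=
    Real.log_le_sub_one_of_pos (div_pos hx1 hx0)
  have hlogy : Real.log (x / (x - 1)) = - Real.log ((x - 1) / x) := by
    rw [Real.log_div hx0.ne' hx1.ne', Real.log_div hx1.ne' hx0.ne']; ring
  have h1x : (1:ℝ) / x ≤ Real.log (x / (x - 1)) := by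
    rw [hlogy]
    have : (x - 1) / x - 1 = -(1 / x) := by field_simp; ring
    linarith [hlog1.trans_eq this]
  have hlhs : (0:ℝ) < (x + cbar) / x := div_pos (by linarith) hx0
  have hlog2 : Real.log ((x + cbar) / x) ≤ cbar / x := by
    have := Real.log_le_sub_one_of_pos hlhs
    have h2 : (x + cbar) / x - 1 = cbar / x := by field_simp; ring
    linarith
  have hmul : cbar / x ≤ cbar * Real.log (x / (x - 1)) := by
    have := mul_le_mul_of_nonneg_left h1x h0.le
    calc cbar / x = cbar * (1 / x) := by ring
    _ ≤ cbar * Real.log (x / (x - 1)) := this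
  calc (x + cbar) / x = Real.exp (Real.log ((x + cbar) / x)) := (Real.exp_log hlhs).symm
    _ ≤ Real.exp (cbar * Real.log (x / (x - 1))) := Real.exp_le_exp.mpr (hlog2.trans hmul)
    _ = Real.exp (Real.log (x / (x - 1)) * cbar) := by rw [mul_comm]
    _ = (x / (x - 1)) ^ cbar := (Real.rpow_def_of_pos hy cbar).symm

private lemma telescope1 (b : ℝ) (hb : 0 < b) :
    ∀ K : ℕ, ∏ k ∈ Finset.Icc 1 K, (((k:ℝ) + b - 1) / ((k:ℝ) + b)) = b / ((K:ℝ) + b) := by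
  intro K
  induction K with
  | zero => simp [div_self hb.ne']
  | succ n ih =>
      rw [Finset.prod_Icc_succ_top (by omega), ih]
      have h1 : (0:ℝ) < (n:ℝ) + b := by positivity
      have h2 : (0:ℝ) < (n:ℝ) + 1 + b := by positivity
      push_cast
      field_simp
      ring

private lemma telescope2 (c : ℝ) (hc : 1 ≤ c) :
    ∀ K : ℕ, ∏ k ∈ Finset.Icc 1 K, (((k:ℝ) + c) / ((k:ℝ) + c - 1)) = ((K:ℝ) + c) / c := by
  intro K
  induction K with
  | zero => simp [div_self (by linarith : c ≠ 0)]
  | succ n ih =>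
      rw [Finset.prod_Icc_succ_top (by omega), ih]
      have h1 : (0:ℝ) < (n:ℝ) + c := by positivity
      have h2 : (0:ℝ) < (n:ℝ) + 1 + c - 1 := by push_cast; linarith [Nat.cast_nonneg (α := ℝ) n]
      have hc0 : (0:ℝ) < c := by linarith
      push_cast
      field_simp
      ring

/-- Monotone comparison of acceleration parameters: for `b ≥ t ≥ 2` and integers `k ≥ 1`,
`k(k+b-1)/((k+t)(k+b-2)) ≤ (k+b-1)/(k+b)` and
`(k+t-1)²(k+b)/((k+t)²(k+b-1)) ≤ (k+b-1)/(k+b)`; consequently, for `c ≥ 1`, `0 < c̄ < 1`,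
the product of the maxima times `(k+c+c̄)/(k+c)` is at most `(b/(K+b))(K/c+1)^c̄`. -/
theorem acceleration_ratio_bounds (b t c cbar : ℝ) (ht : 2 ≤ t) (hbt : t ≤ b)
    (hc : 1 ≤ c) (h0 : 0 < cbar) (h1 : cbar < 1) :
    (∀ k : ℕ, 1 ≤ k →
      (k : ℝ) * ((k : ℝ) + b - 1) / (((k : ℝ) + t) * ((k : ℝ) + b - 2)) ≤
        ((k : ℝ) + b - 1) / ((k : ℝ) + b)) ∧
    (∀ k : ℕ, 1 ≤ k →
      ((k : ℝ) + t - 1) ^ 2 * ((k : ℝ) + b) / (((k : ℝ) + t) ^ 2 * ((k : ℝ) + b - 1)) ≤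
        ((k : ℝ) + b - 1) / ((k : ℝ) + b)) ∧
    ∀ K : ℕ, 1 ≤ K →
      ∏ k ∈ Finset.Icc 1 K,
          (max (max ((k : ℝ) * ((k : ℝ) + b - 1) / (((k : ℝ) + t) * ((k : ℝ) + b - 2)))
                (((k : ℝ) + b - 1) / ((k : ℝ) + b)))
              (((k : ℝ) + t - 1) ^ 2 * ((k : ℝ) + b) /
                (((k : ℝ) + t) ^ 2 * ((k : ℝ) + b - 1))) *
            (((k : ℝ) + c + cbar) / ((k : ℝ) + c))) ≤
        b / ((K : ℝ) + b) * ((K : ℝ) / c + 1) ^ cbar := by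
  have hb2 : (2:ℝ) ≤ b := le_trans ht hbt
  -- first inequality
  have ineq1 : ∀ k : ℕ, 1 ≤ k →
      (k : ℝ) * ((k : ℝ) + b - 1) / (((k : ℝ) + t) * ((k : ℝ) + b - 2)) ≤
        ((k : ℝ) + b - 1) / ((k : ℝ) + b) := by
    intro k hk
    have hk1 : (1:ℝ) ≤ (k:ℝ) := by exact_mod_cast hk
    have hkt : (0:ℝ) < (k:ℝ) + t := by linarith
    have hkb2 : (0:ℝ) < (k:ℝ) + b - 2 := by linarith
    have hkb : (0:ℝ) < (k:ℝ) + b := by linarith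
    have hkb1 : (0:ℝ) ≤ (k:ℝ) + b - 1 := by linarith
    have h3 : (0:ℝ) ≤ (k:ℝ)*(t-2) := mul_nonneg (by linarith) (by linarith)
    have h4 : (0:ℝ) ≤ t*(b-2) := mul_nonneg (by linarith) (by linarith)
    rw [div_le_div_iff₀ (by positivity) hkb]
    nlinarith [mul_nonneg hkb1 (by linarith : (0:ℝ) ≤ (k:ℝ)*(t-2) + t*(b-2))]
  have ineq2 : ∀ k : ℕ, 1 ≤ k →
      ((k : ℝ) + t - 1) ^ 2 * ((k : ℝ) + b) / (((k : ℝ) + t) ^ 2 * ((k : ℝ) + b - 1)) ≤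
        ((k : ℝ) + b - 1) / ((k : ℝ) + b) := by
    intro k hk
    have hk1 : (1:ℝ) ≤ (k:ℝ) := by exact_mod_cast hk
    have hkt : (0:ℝ) < (k:ℝ) + t := by linarith
    have hkt1 : (0:ℝ) < (k:ℝ) + t - 1 := by linarith
    have hkb : (0:ℝ) < (k:ℝ) + b := by linarith
    have hkb1 : (0:ℝ) < (k:ℝ) + b - 1 := by linarith
    rw [div_le_div_iff₀ (by positivity) hkb]
    nlinarith [sq_nonneg ((k:ℝ)+t), sq_nonneg ((k:ℝ)+b), mul_pos hkt hkb,
      mul_pos hkt1 hkb, mul_pos hkt hkb1,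
      mul_nonneg (mul_nonneg hkt1.le hkb.le) (by linarith : (0:ℝ) ≤ b - t),
      mul_nonneg (mul_nonneg hkt.le hkb.le) (by linarith : (0:ℝ) ≤ b - t)]
  refine ⟨ineq1, ineq2, ?_⟩
  intro K _
  have hb0 : (0:ℝ) < b := by linarith
  have hc0 : (0:ℝ) < c := by linarith
  have step : ∀ k ∈ Finset.Icc 1 K,
      (max (max ((k : ℝ) * ((k : ℝ) + b - 1) / (((k : ℝ) + t) * ((k : ℝ) + b - 2)))
            (((k : ℝ) + b - 1) / ((k : ℝ) + b)))
          (((k : ℝ) + t - 1) ^ 2 * ((k : ℝ) + b) /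
            (((k : ℝ) + t) ^ 2 * ((k : ℝ) + b - 1))) *
        (((k : ℝ) + c + cbar) / ((k : ℝ) + c))) ≤
      (((k:ℝ) + b - 1) / ((k:ℝ) + b)) * ((((k:ℝ) + c) / ((k:ℝ) + c - 1)) ^ cbar) := by
    intro k hk
    have hk1 : 1 ≤ k := (Finset.mem_Icc.mp hk).1
    have hk1' : (1:ℝ) ≤ (k:ℝ) := by exact_mod_cast hk1
    have hmax : max (max ((k : ℝ) * ((k : ℝ) + b - 1) / (((k : ℝ) + t) * ((k : ℝ) + b - 2)))
            (((k : ℝ) + b - 1) / ((k : ℝ) + b)))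
          (((k : ℝ) + t - 1) ^ 2 * ((k : ℝ) + b) /
            (((k : ℝ) + t) ^ 2 * ((k : ℝ) + b - 1))) = ((k:ℝ) + b - 1) / ((k:ℝ) + b) := by
      rw [max_eq_right (ineq1 k hk1), max_eq_left (ineq2 k hk1)]
    rw [hmax]
    have hfac : (0:ℝ) ≤ ((k:ℝ) + b - 1) / ((k:ℝ) + b) := by
      apply div_nonneg <;> linarith
    apply mul_le_mul_of_nonneg_left _ hfac
    have hx : (2:ℝ) ≤ (k:ℝ) + c := by linarith
    have := key_rpow cbar ((k:ℝ) + c) h0 h1.le hx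
    calc ((k:ℝ) + c + cbar) / ((k:ℝ) + c) = (((k:ℝ) + c) + cbar) / ((k:ℝ) + c) := by ring_nf
      _ ≤ (((k:ℝ) + c) / (((k:ℝ) + c) - 1)) ^ cbar := this
      _ = (((k:ℝ) + c) / ((k:ℝ) + c - 1)) ^ cbar := by ring_nf
  have hnn : ∀ k ∈ Finset.Icc 1 K,
      (0:ℝ) ≤ (max (max ((k : ℝ) * ((k : ℝ) + b - 1) / (((k : ℝ) + t) * ((k : ℝ) + b - 2)))
            (((k : ℝ) + b - 1) / ((k : ℝ) + b)))
          (((k : ℝ) + t - 1) ^ 2 * ((k : ℝ) + b) /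
            (((k : ℝ) + t) ^ 2 * ((k : ℝ) + b - 1))) *
        (((k : ℝ) + c + cbar) / ((k : ℝ) + c))) := by
    intro k hk
    have hk1 : 1 ≤ k := (Finset.mem_Icc.mp hk).1
    have hk1' : (1:ℝ) ≤ (k:ℝ) := by exact_mod_cast hk1
    apply mul_nonneg
    · exact le_trans (div_nonneg (by linarith) (by linarith))
        (le_max_of_le_left (le_max_right _ _))
    · apply div_nonneg <;> linarith
  calc ∏ k ∈ Finset.Icc 1 K, _ ≤
      ∏ k ∈ Finset.Icc 1 K,
        ((((k:ℝ) + b - 1) / ((k:ℝ) + b)) * ((((k:ℝ) + c) / ((k:ℝ) + c - 1)) ^ cbar)) :=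
        Finset.prod_le_prod hnn step
    _ = (∏ k ∈ Finset.Icc 1 K, (((k:ℝ) + b - 1) / ((k:ℝ) + b))) *
        (∏ k ∈ Finset.Icc 1 K, (((k:ℝ) + c) / ((k:ℝ) + c - 1)) ^ cbar) :=
        Finset.prod_mul_distrib
    _ = b / ((K:ℝ) + b) * ((K:ℝ) / c + 1) ^ cbar := by
        rw [telescope1 b hb0 K]
        congr 1
        rw [Real.finset_prod_rpow _ _ (fun k hk => by
          have hk1 : 1 ≤ k := (Finset.mem_Icc.mp hk).1
          have hk1' : (1:ℝ) ≤ (k:ℝ) := by exact_mod_cast hk1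
          apply div_nonneg <;> linarith) cbar]
        rw [telescope2 c hc K]
        congr 1
        field_simp
end
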